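/- arXiv:0710.2932 — 7 statements merged into one kernel-verified Lean document; each statement's English description precedes it below -/
import Mathlib

section
/- Given elements v ≤ w in a Coxeter group W and a fixed reduced expression for w, there exists a unique positive distinguished subexpression for v; that is, a unique subexpression v = t_1 t_2 ... t_n of the reduced word s_{i_1} ... s_{i_n} (each t_j ∈ {1, s_{i_j}}) such that for all j, the partial product v_{(j-1)} = t_1...t_{j-1} satisfies v_{(j-1)} < v_{(j-1)} s_{i_j} in Bruhat order. -/
/-- The Bruhat order on a Coxeter group, via the subword property:
`v ≤ w` iff some reduced word for `w` contains a sublist that is a reduced word for `v`. -/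
def BruhatLE {B W : Type*} [Group W] {M : CoxeterMatrix B}
    (cs : CoxeterSystem M W) (v w : W) : Prop :=
  ∃ ω : List B, cs.IsReduced ω ∧ cs.wordProd ω = w ∧
    ∃ ω' : List B, ω'.Sublist ω ∧ cs.IsReduced ω' ∧ cs.wordProd ω' = v

/-!
The parity of the number of occurrences of a reflection `t` in the right inversion sequence of a
word depends only on the product `w` of the word: it is the cocycle of the action of `W` on
`W × ZMod 2` lifting `s ↦ ((t, ε) ↦ (s t s, ε + [t = s]))`. Computing it through a reduced word
for `w t` followed by `t` shows that it is odd whenever `ℓ (w t) < ℓ w`: this is the strong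
exchange condition, for arbitrary words. Hence the products of subwords of any word are closed
downwards along Bruhat chains, while Humphreys' lifting argument puts every subword product of a
reduced word below its product in the chain order. So `v ≤ w` makes `v` a subword product of every
word for `w`, and the positive distinguished subexpression is then forced letter by letter from the
right: its last letter is `s_{i_n}` exactly when `s_{i_n}` is a right descent of `v`.
-/

theorem inv_pow_mul_mul_pow_eq_iff {G : Type*} [Group G] (x t c : G) (k : ℕ) :
    x⁻¹ ^ k * t * x ^ k = c ↔ t = x ^ k * c * x⁻¹ ^ k := by
  rw [inv_pow]
  constructor <;> rintro rfl <;> group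

theorem List.forall₂_append_singleton_iff {α β : Type*} {R : α → β → Prop} {l₁ : List α}
    {l₂ : List β} {a : α} {b : β} :
    List.Forall₂ R (l₁ ++ [a]) (l₂ ++ [b]) ↔ List.Forall₂ R l₁ l₂ ∧ R a b := by
  rw [← List.forall₂_reverse_iff]
  simp [List.forall₂_reverse_iff, and_comm]

namespace CoxeterSystem

variable {B W : Type*} [Group W] {M : CoxeterMatrix B} (cs : CoxeterSystem M W)

local prefix:100 "s" => cs.simple
local prefix:100 "π" => cs.wordProd
local prefix:100 "ℓ" => cs.length
local prefix:100 "ris" => cs.rightInvSeq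

theorem simple_mul_mul_simple_eq_iff (i : B) (x c : W) :
    s i * x * s i = c ↔ x = s i * c * s i := by
  simpa [cs.inv_simple] using inv_pow_mul_mul_pow_eq_iff (s i) x c 1

section ParityAction

variable [DecidableEq W]

def simpleParityPerm (i : B) : Equiv.Perm (W × ZMod 2) :=
  Function.Involutive.toPerm
    (fun x => (s i * x.1 * s i, x.2 + if x.1 = s i then 1 else 0)) <| by
    rintro ⟨t, ε⟩
    refine Prod.ext (by simp [mul_assoc, cs.simple_mul_simple_cancel_left]) ?_
    simp only [simple_mul_mul_simple_eq_iff, cs.simple_mul_simple_self, one_mul, add_assoc]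
    split_ifs <;> decide +revert

theorem simpleParityPerm_apply (i : B) (t : W) (ε : ZMod 2) :
    cs.simpleParityPerm i (t, ε) = (s i * t * s i, ε + if t = s i then 1 else 0) := rfl

theorem simpleParityPerm_mul_pow_apply (i j : B) (k : ℕ) (t : W) (ε : ZMod 2) :
    ((cs.simpleParityPerm i * cs.simpleParityPerm j) ^ k) (t, ε) =
      ((s j * s i)⁻¹ ^ k * t * (s j * s i) ^ k,
        ε + ∑ q ∈ Finset.range (2 * k), if t = (s j * s i) ^ q * s j then 1 else 0) := by
  set g := s j * s i with hg
  have hinv : g⁻¹ = s i * s j := by simp [hg, cs.inv_simple]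
  induction k generalizing ε with
  | zero => simp
  | succ k ih =>
    have hpow : s j * g⁻¹ ^ k = g ^ k * s j :=
      SemiconjBy.pow_right (by simp [SemiconjBy, hg, ← mul_assoc]) k
    have e₁ : g⁻¹ ^ k * t * g ^ k = s j ↔ t = g ^ (2 * k) * s j := by
      rw [inv_pow_mul_mul_pow_eq_iff, mul_assoc, hpow, two_mul, pow_add, mul_assoc]
    have e₂ : s j * (g⁻¹ ^ k * t * g ^ k) * s j = s i ↔ t = g ^ (2 * k + 1) * s j := by
      rw [simple_mul_mul_simple_eq_iff, ← hg, inv_pow_mul_mul_pow_eq_iff, mul_assoc, mul_assoc,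
        hpow, ← mul_assoc, ← mul_assoc, ← pow_succ, ← pow_add]
      ring_nf
    rw [pow_succ', Equiv.Perm.mul_apply, ih, Equiv.Perm.mul_apply, simpleParityPerm_apply,
      simpleParityPerm_apply, Prod.mk.injEq]
    refine ⟨by rw [pow_succ', pow_succ, hinv]; simp only [hg, mul_assoc], ?_⟩
    rw [show 2 * (k + 1) = 2 * k + 1 + 1 by ring, Finset.sum_range_succ, Finset.sum_range_succ]
    simp only [e₁, e₂]
    ring

theorem isLiftable_simpleParityPerm : M.IsLiftable cs.simpleParityPerm := by
  intro i j
  refine Equiv.ext fun ⟨t, ε⟩ => ?_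
  have hm : (s j * s i) ^ M i j = 1 := cs.simple_mul_simple_pow' i j
  rw [simpleParityPerm_mul_pow_apply, two_mul, Finset.sum_range_add]
  simp [hm, pow_add, CharTwo.add_self_eq_zero]

def parityAction : W →* Equiv.Perm (W × ZMod 2) :=
  cs.lift ⟨cs.simpleParityPerm, cs.isLiftable_simpleParityPerm⟩

theorem parityAction_simple (i : B) : cs.parityAction (s i) = cs.simpleParityPerm i :=
  cs.lift_apply_simple cs.isLiftable_simpleParityPerm i

theorem parityAction_wordProd (ω : List B) (t : W) (ε : ZMod 2) :
    cs.parityAction (π ω) (t, ε) = (π ω * t * (π ω)⁻¹, ε + (ris ω).count t) := by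
  induction ω generalizing ε with
  | nil => simp
  | cons i ω ih =>
    rw [wordProd_cons, map_mul, Equiv.Perm.mul_apply, ih, parityAction_simple,
      simpleParityPerm_apply, Prod.mk.injEq]
    refine ⟨by simp [mul_assoc, cs.inv_simple], ?_⟩
    have hconj : π ω * t * (π ω)⁻¹ = s i ↔ (π ω)⁻¹ * s i * π ω = t := by
      constructor
      · rintro h; rw [← h]; group
      · rintro rfl; group
    simp only [rightInvSeq, List.count_cons, beq_iff_eq, hconj]
    push_cast
    ring

def inversionParity (w t : W) : ZMod 2 := (cs.parityAction w (t, 0)).2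

theorem inversionParity_wordProd (ω : List B) (t : W) :
    cs.inversionParity (π ω) t = (ris ω).count t := by
  simp [inversionParity, parityAction_wordProd]

theorem parityAction_apply (w t : W) (ε : ZMod 2) :
    cs.parityAction w (t, ε) = (w * t * w⁻¹, ε + cs.inversionParity w t) := by
  obtain ⟨ω, rfl⟩ := cs.wordProd_surjective w
  simp [inversionParity_wordProd, parityAction_wordProd]

theorem inversionParity_one (t : W) : cs.inversionParity 1 t = 0 := by
  simp [inversionParity]

theorem inversionParity_simple_self (i : B) : cs.inversionParity (s i) (s i) = 1 := by
  simp [inversionParity, parityAction_simple, simpleParityPerm_apply]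

theorem inversionParity_mul (u w t : W) :
    cs.inversionParity (u * w) t =
      cs.inversionParity w t + cs.inversionParity u (w * t * w⁻¹) := by
  show (cs.parityAction (u * w) (t, 0)).2 = _
  rw [map_mul, Equiv.Perm.mul_apply, parityAction_apply, parityAction_apply, zero_add]

theorem inversionParity_self {t : W} (ht : cs.IsReflection t) : cs.inversionParity t t = 1 := by
  obtain ⟨y, i, rfl⟩ := ht
  -- With `η := inversionParity` and `t := y s y⁻¹`, the cocycle identity gives
  -- `η t t = η y⁻¹ t + η s s + η y s`, while `η y⁻¹ t + η y s = η 1 t = 0`.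
  have h₁ := cs.inversionParity_mul (y * s i) y⁻¹ (y * s i * y⁻¹)
  have h₂ := cs.inversionParity_mul y (s i) (s i)
  have h₀ := cs.inversionParity_mul y y⁻¹ (y * s i * y⁻¹)
  have hy : y⁻¹ * (y * s i * y⁻¹) * y = s i := by group
  simp only [mul_inv_cancel, inversionParity_one, inversionParity_simple_self, inv_inv,
    cs.inv_simple, hy, cs.simple_mul_simple_cancel_right] at h₀ h₁ h₂
  rw [h₁, h₂]
  linear_combination -h₀

end ParityAction

theorem mem_rightInvSeq_of_isRightInversion {ω : List B} {t : W}
    (h : cs.IsRightInversion (π ω) t) : t ∈ ris ω := by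
  classical
  obtain ⟨σ, hσ, hσω⟩ := cs.exists_isReduced (π ω * t)
  have hσt : t ∉ ris σ := fun hmem => by
    have := (cs.isRightInversion_of_mem_rightInvSeq hσ hmem).2
    rw [← hσω, mul_assoc, h.1.mul_self, mul_one] at this
    exact lt_asymm this h.2
  have hparity : cs.inversionParity (π ω) t = 1 := by
    calc cs.inversionParity (π ω) t = cs.inversionParity (π ω * t * t) t := by
          rw [mul_assoc, h.1.mul_self, mul_one]
      _ = 1 := by
          rw [inversionParity_mul, inversionParity_self cs h.1, h.1.mul_self, one_mul, h.1.inv,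
            hσω, inversionParity_wordProd, List.count_eq_zero_of_not_mem hσt]
          simp
  rw [inversionParity_wordProd] at hparity
  by_contra hmem
  simp [List.count_eq_zero_of_not_mem hmem] at hparity

theorem isRightInversion_wordProd_iff {ω : List B} (hω : cs.IsReduced ω) {t : W} :
    cs.IsRightInversion (π ω) t ↔ t ∈ ris ω :=
  ⟨cs.mem_rightInvSeq_of_isRightInversion, cs.isRightInversion_of_mem_rightInvSeq hω⟩

theorem isRightInversion_mul_simple_iff {w : W} {i : B} (h : ℓ w < ℓ (w * s i)) {t : W} :
    cs.IsRightInversion (w * s i) t ↔ t = s i ∨ cs.IsRightInversion w (s i * t * s i) := by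
  obtain ⟨ρ, hρ, rfl⟩ := cs.exists_isReduced w
  have hρi : cs.IsReduced (ρ.concat i) := by
    have := cs.length_mul_simple (π ρ) i
    rw [IsReduced, wordProd_concat, List.length_concat, ← hρ.eq]
    omega
  rw [← wordProd_concat, isRightInversion_wordProd_iff cs hρi, rightInvSeq_concat,
    isRightInversion_wordProd_iff cs hρ, List.concat_eq_append, List.mem_append,
    List.mem_singleton, List.mem_map, or_comm]
  simp only [MulAut.conj_apply, cs.inv_simple, simple_mul_mul_simple_eq_iff, exists_eq_right]

/-- Its reflexive transitive closure `≤ᴮ` is the Bruhat order in its usual chain form. -/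
def BruhatStep (u w : W) : Prop := ∃ t, cs.IsRightInversion w t ∧ w * t = u

local infix:50 " ≤ᴮ " => Relation.ReflTransGen cs.BruhatStep

theorem bruhatStep_mul_simple_self {w : W} {i : B} (h : ℓ (w * s i) < ℓ w) :
    cs.BruhatStep (w * s i) w :=
  ⟨s i, ⟨cs.isReflection_simple i, h⟩, rfl⟩

theorem bruhatStep_self_mul_simple {w : W} {i : B} (h : ℓ w < ℓ (w * s i)) :
    cs.BruhatStep w (w * s i) :=
  ⟨s i, ⟨cs.isReflection_simple i, by rwa [simple_mul_simple_cancel_right]⟩,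
    simple_mul_simple_cancel_right _ _⟩

theorem mul_simple_le_or_of_bruhatStep {u w : W} (h : cs.BruhatStep u w) (i : B) :
    u * s i ≤ᴮ w ∨ u * s i ≤ᴮ w * s i := by
  obtain ⟨t, ⟨ht, hlt⟩, rfl⟩ := h
  rcases lt_or_gt_of_ne (cs.length_mul_simple_ne (w * t) i) with hdesc | hasc
  · exact .inl (.head (cs.bruhatStep_mul_simple_self hdesc) (.single ⟨t, ⟨ht, hlt⟩, rfl⟩))
  by_cases hw : w * t * s i = w
  · exact .inl (by rw [hw])
  have hrefl : cs.IsReflection (s i * t * s i) := by simpa [cs.inv_simple] using ht.conj (s i)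
  have hws : w * s i * (s i * t * s i) = w * t * s i := by
    simp [mul_assoc, cs.simple_mul_simple_cancel_left]
  refine .inr (.single ⟨s i * t * s i, ⟨hrefl, ?_⟩, hws⟩)
  rw [hws]
  -- Otherwise `s t s` is a right inversion of `w t s`, so `t` is one of `w t`, against `w t < w`.
  by_contra hge
  have hinv : cs.IsRightInversion (w * t * s i) (s i * t * s i) := by
    have hne := hrefl.length_mul_left_ne (w * t * s i)
    have hback : w * t * s i * (s i * t * s i) = w * s i := by
      simp only [mul_assoc, cs.simple_mul_simple_cancel_left]
      rw [← mul_assoc t, ht.mul_self, one_mul]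
    rw [hback] at hne
    exact ⟨hrefl, hback ▸ lt_of_le_of_ne (not_lt.1 hge) hne⟩
  rcases (cs.isRightInversion_mul_simple_iff hasc).1 hinv with hts | hwt
  · rw [simple_mul_mul_simple_eq_iff, cs.simple_mul_simple_self, one_mul] at hts
    exact hw (by rw [hts, simple_mul_simple_cancel_right])
  · have hsts : s i * (s i * t * s i) * s i = t := by
      simp [mul_assoc, cs.simple_mul_simple_cancel_left]
    have := hwt.2
    rw [hsts, mul_assoc, ht.mul_self, mul_one] at this
    exact lt_asymm hlt this

theorem mul_simple_le_or_of_le {u w : W} (h : u ≤ᴮ w) (i : B) :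
    u * s i ≤ᴮ w ∨ u * s i ≤ᴮ w * s i := by
  induction h using Relation.ReflTransGen.head_induction_on with
  | refl => exact .inr .refl
  | head hstep hle ih =>
    rcases cs.mul_simple_le_or_of_bruhatStep hstep i with h | h
    · exact .inl (h.trans hle)
    · exact ih.imp h.trans h.trans

def subwordProds (ω : List B) : Set W := {v | ∃ τ, τ.Sublist ω ∧ π τ = v}

theorem wordProd_mem_subwordProds (ω : List B) : π ω ∈ cs.subwordProds ω := ⟨ω, .refl ω, rfl⟩

theorem mem_subwordProds_nil {v : W} : v ∈ cs.subwordProds [] ↔ v = 1 := by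
  simp [subwordProds, eq_comm]

theorem mem_subwordProds_append_singleton {ω : List B} {i : B} {v : W} :
    v ∈ cs.subwordProds (ω ++ [i]) ↔ v ∈ cs.subwordProds ω ∨ v * s i ∈ cs.subwordProds ω := by
  simp only [subwordProds, Set.mem_ofPred_eq, List.sublist_append_iff, List.sublist_singleton]
  constructor
  · rintro ⟨_, ⟨τ, _, rfl, hτ, rfl | rfl⟩, rfl⟩
    · exact .inl ⟨τ, hτ, by simp⟩
    · exact .inr ⟨τ, hτ, by simp [wordProd_append, simple_mul_simple_cancel_right]⟩
  · rintro (⟨τ, hτ, rfl⟩ | ⟨τ, hτ, hτv⟩)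
    · exact ⟨τ, ⟨τ, [], by simp, hτ, .inl rfl⟩, rfl⟩
    · exact ⟨τ ++ [i], ⟨τ, [i], rfl, hτ, .inr rfl⟩, by
        rw [wordProd_append, hτv, wordProd_singleton, simple_mul_simple_cancel_right]⟩

theorem mem_subwordProds_of_bruhatStep {ω : List B} {u v : W} (h : cs.BruhatStep u v)
    (hv : v ∈ cs.subwordProds ω) : u ∈ cs.subwordProds ω := by
  obtain ⟨t, ht, rfl⟩ := h
  obtain ⟨τ, hτ, rfl⟩ := hv
  obtain ⟨k, hk, rfl⟩ := List.getElem_of_mem (cs.mem_rightInvSeq_of_isRightInversion ht)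
  refine ⟨τ.eraseIdx k, (List.eraseIdx_sublist τ k).trans hτ, ?_⟩
  rw [← wordProd_mul_getD_rightInvSeq, List.getD_eq_getElem]

theorem mem_subwordProds_of_le {ω : List B} {u v : W} (h : u ≤ᴮ v)
    (hv : v ∈ cs.subwordProds ω) : u ∈ cs.subwordProds ω :=
  h.head_induction_on hv fun hstep _ ih => cs.mem_subwordProds_of_bruhatStep hstep ih

theorem le_wordProd_of_mem_subwordProds {ω : List B} (hω : cs.IsReduced ω) {u : W}
    (hu : u ∈ cs.subwordProds ω) : u ≤ᴮ π ω := by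
  induction ω using List.reverseRecOn generalizing u with
  | nil => rw [cs.mem_subwordProds_nil.1 hu, wordProd_nil]
  | append_singleton ω i ih =>
    have hlen : ℓ (π ω * s i) = ω.length + 1 := by simpa [IsReduced, wordProd_append] using hω
    have hle := cs.length_wordProd_le ω
    have hmul := cs.length_mul_simple (π ω) i
    have hωred : cs.IsReduced ω := by rw [IsReduced]; omega
    have hstep := cs.bruhatStep_self_mul_simple (w := π ω) (i := i) (by omega)
    rw [wordProd_append, wordProd_singleton]
    rcases cs.mem_subwordProds_append_singleton.1 hu with hu | hu
    · exact (ih hωred hu).tail hstep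
    · rcases cs.mul_simple_le_or_of_le (ih hωred hu) i with h | h <;>
        rw [simple_mul_simple_cancel_right] at h
      · exact h.tail hstep
      · exact h

theorem mem_subwordProds_of_bruhatLE {v : W} {ω : List B} (h : BruhatLE cs v (π ω)) :
    v ∈ cs.subwordProds ω := by
  obtain ⟨ω₀, hω₀, hπ, τ, hτ, -, rfl⟩ := h
  exact cs.mem_subwordProds_of_le (hπ ▸ cs.le_wordProd_of_mem_subwordProds hω₀ ⟨τ, hτ, rfl⟩)
    (cs.wordProd_mem_subwordProds ω)

def IsPosDistinguished (ω : List B) (L : List W) : Prop :=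
  List.Forall₂ (fun i x => x = 1 ∨ x = s i) ω L ∧
    ∀ j (hj : j < ω.length), ℓ (L.take j).prod < ℓ ((L.take j).prod * s ω[j])

theorem isPosDistinguished_append_singleton_iff {ω : List B} {i : B} {L : List W} {x : W} :
    cs.IsPosDistinguished (ω ++ [i]) (L ++ [x]) ↔
      cs.IsPosDistinguished ω L ∧ (x = 1 ∨ x = s i) ∧ ℓ L.prod < ℓ (L.prod * s i) := by
  simp only [IsPosDistinguished, List.forall₂_append_singleton_iff]
  constructor
  · rintro ⟨⟨hF, hx⟩, hpos⟩
    have hlen := hF.length_eq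
    refine ⟨⟨hF, fun j hj => ?_⟩, hx, ?_⟩
    · have := hpos j (by simp; omega)
      rwa [List.take_append_of_le_length (hlen ▸ hj.le), List.getElem_append_left hj] at this
    · simpa [hlen] using hpos ω.length (by simp)
  · rintro ⟨⟨hF, hpos⟩, hx, hlast⟩
    have hlen := hF.length_eq
    refine ⟨⟨hF, hx⟩, fun j hj => ?_⟩
    rcases Nat.lt_or_ge j ω.length with hj' | hj'
    · simpa [List.take_append_of_le_length (hlen ▸ hj'.le), List.getElem_append_left hj'] using
        hpos j hj'
    · obtain rfl : j = ω.length := by simp at hj; omega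
      simpa [hlen] using hlast

theorem exists_isPosDistinguished {ω : List B} {v : W} (hv : v ∈ cs.subwordProds ω) :
    ∃ L, cs.IsPosDistinguished ω L ∧ L.prod = v := by
  induction ω using List.reverseRecOn generalizing v with
  | nil => exact ⟨[], ⟨.nil, by simp⟩, by simp [cs.mem_subwordProds_nil.1 hv]⟩
  | append_singleton ω i ih =>
    rw [mem_subwordProds_append_singleton] at hv
    rcases lt_or_gt_of_ne (cs.length_mul_simple_ne v i) with hdesc | hasc
    · obtain ⟨L, hL, hprod⟩ :=
        ih <| hv.elim (cs.mem_subwordProds_of_bruhatStep (cs.bruhatStep_mul_simple_self hdesc)) id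
      refine ⟨L ++ [s i], cs.isPosDistinguished_append_singleton_iff.2 ⟨hL, .inr rfl, ?_⟩, ?_⟩
      · rwa [hprod, simple_mul_simple_cancel_right]
      · rw [List.prod_append, List.prod_singleton, hprod, simple_mul_simple_cancel_right]
    · obtain ⟨L, hL, rfl⟩ :=
        ih <| hv.elim id (cs.mem_subwordProds_of_bruhatStep (cs.bruhatStep_self_mul_simple hasc))
      exact ⟨L ++ [1], cs.isPosDistinguished_append_singleton_iff.2 ⟨hL, .inl rfl, hasc⟩,
        by simp⟩

theorem eq_of_isPosDistinguished {ω : List B} {L₁ L₂ : List W}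
    (h₁ : cs.IsPosDistinguished ω L₁) (h₂ : cs.IsPosDistinguished ω L₂)
    (h : L₁.prod = L₂.prod) : L₁ = L₂ := by
  induction ω using List.reverseRecOn generalizing L₁ L₂ with
  | nil => rw [List.forall₂_nil_left_iff.1 h₁.1, List.forall₂_nil_left_iff.1 h₂.1]
  | append_singleton ω i ih =>
    have hsnoc {L : List W} (hL : cs.IsPosDistinguished (ω ++ [i]) L) : ∃ L' x, L = L' ++ [x] :=
      (List.eq_nil_or_concat' _).resolve_left fun h => by simpa [h] using hL.1.length_eq
    obtain ⟨L₁, x₁, rfl⟩ := hsnoc h₁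
    obtain ⟨L₂, x₂, rfl⟩ := hsnoc h₂
    rw [isPosDistinguished_append_singleton_iff] at h₁ h₂
    simp only [List.prod_append, List.prod_singleton] at h
    obtain ⟨h₁, rfl | rfl, hlast₁⟩ := h₁ <;> obtain ⟨h₂, rfl | rfl, hlast₂⟩ := h₂
    · rw [ih h₁ h₂ (by simpa using h)]
    · rw [mul_one] at h
      rw [h, simple_mul_simple_cancel_right] at hlast₁
      exact absurd hlast₂ (lt_asymm hlast₁)
    · rw [mul_one] at h
      rw [← h, simple_mul_simple_cancel_right] at hlast₂
      exact absurd hlast₁ (lt_asymm hlast₂)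
    · rw [ih h₁ h₂ (mul_right_cancel h)]

theorem isPosDistinguished_ofFn_iff {ω : List B} (t : Fin ω.length → W) :
    cs.IsPosDistinguished ω (List.ofFn t) ↔ (∀ j, t j = 1 ∨ t j = s (ω.get j)) ∧
      ∀ j : Fin ω.length, ℓ ((List.ofFn t).take (j : ℕ)).prod <
        ℓ (((List.ofFn t).take (j : ℕ)).prod * s (ω.get j)) := by
  simp [IsPosDistinguished, List.forall₂_iff_get, Fin.forall_iff]

end CoxeterSystem

theorem exists_unique_positive_distinguished_subexpression_general
    {B W : Type*} [Group W] {M : CoxeterMatrix B} (cs : CoxeterSystem M W)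
    (v : W) (ω : List B)
    (hle : BruhatLE cs v (cs.wordProd ω)) :
    ∃! t : Fin ω.length → W,
      (∀ j : Fin ω.length, t j = 1 ∨ t j = cs.simple (ω.get j)) ∧
      (List.ofFn t).prod = v ∧
      ∀ j : Fin ω.length,
        cs.length (((List.ofFn t).take (j : ℕ)).prod) <
          cs.length (((List.ofFn t).take (j : ℕ)).prod * cs.simple (ω.get j)) := by
  obtain ⟨L, hL, rfl⟩ := cs.exists_isPosDistinguished (cs.mem_subwordProds_of_bruhatLE hle)
  have hlen : L.length = ω.length := hL.1.length_eq.symm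
  have hofFn : List.ofFn (fun j : Fin ω.length => L[(j : ℕ)]) = L :=
    List.ext_getElem (by simp [hlen]) (by simp)
  refine ⟨fun j => L[(j : ℕ)], ?_, fun t ⟨hletter, hprod, hpos⟩ => List.ofFn_injective ?_⟩
  · obtain ⟨hletter, hpos⟩ := (cs.isPosDistinguished_ofFn_iff _).1 (hofFn ▸ hL)
    exact ⟨hletter, by rw [hofFn], hpos⟩
  · rw [hofFn]
    exact cs.eq_of_isPosDistinguished ((cs.isPosDistinguished_ofFn_iff t).2 ⟨hletter, hpos⟩)
      hL hprod

/-- Given `v ≤ w` in Bruhat order and a fixed reduced expression `ω` for `w`, there is a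
unique positive distinguished subexpression for `v`: a unique choice of letters
`t j ∈ {1, s_{i_j}}` whose product is `v` and such that each partial product
`v_{(j-1)} = t_0 ⋯ t_{j-1}` satisfies `v_{(j-1)} < v_{(j-1)} s_{i_j}`, i.e. right
multiplication by `s_{i_j}` increases the length. -/
theorem exists_unique_positive_distinguished_subexpression
    {B W : Type*} [Group W] {M : CoxeterMatrix B} (cs : CoxeterSystem M W)
    (v : W) (ω : List B) (hred : cs.IsReduced ω)
    (hle : BruhatLE cs v (cs.wordProd ω)) :
    ∃! t : Fin ω.length → W,
      (∀ j : Fin ω.length, t j = 1 ∨ t j = cs.simple (ω.get j)) ∧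
      (List.ofFn t).prod = v ∧
      ∀ j : Fin ω.length,
        cs.length (((List.ofFn t).take (j : ℕ)).prod) <
          cs.length (((List.ofFn t).take (j : ℕ)).prod * cs.simple (ω.get j)) :=
  exists_unique_positive_distinguished_subexpression_general cs v ω hle
end

section
/- Any two linear extensions of a finite poset P, viewed as bijections P → {1,...,|P|}, can be connected by a sequence of linear extensions in which each consecutive pair differs by transposing the positions of two incomparable elements of P. -/
attribute [local instance] Classical.propDecidable

/-- A linear extension of a finite poset `P`: an order-preserving bijection
`P ≃ Fin (|P|)`. -/
def IsLinExt {P : Type*} [PartialOrder P] [Fintype P]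
    (e : P ≃ Fin (Fintype.card P)) : Prop :=
  ∀ a b : P, a < b → e a < e b

section Aux

variable {P : Type*} [PartialOrder P] [Fintype P]

open Classical

/-- inversion set -/
noncomputable def invSet (e e' : P ≃ Fin (Fintype.card P)) : Finset (P × P) :=
  Finset.univ.filter (fun p => e p.1 < e p.2 ∧ e' p.2 < e' p.1)

omit [PartialOrder P] in
lemma eq_of_invSet_empty (e e' : P ≃ Fin (Fintype.card P)) (h : invSet e e' = ∅) :
    e = e' := by
  have key : ∀ a b : P, e a < e b → e' a < e' b := by
    intro a b hab
    rcases lt_trichotomy (e' a) (e' b) with h1 | h1 | h1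
    · exact h1
    · exact absurd (e'.injective h1) (fun hh => by simp [hh] at hab)
    · exfalso
      have : (a, b) ∈ invSet e e' := by simp [invSet, hab, h1]
      simp [h] at this
  have hs : StrictMono (fun i => e' (e.symm i)) := by
    intro i j hij
    exact key _ _ (by simpa using hij)
  have hrange : Set.range (fun i => e' (e.symm i)) = Set.range (id : Fin _ → Fin _) := by
    rw [Set.range_id]
    exact Set.range_eq_univ.2 (fun i => ⟨e (e'.symm i), by simp⟩)
  have inst : WellFoundedLT (Fin (Fintype.card P)) := inferInstance
  have := (hs.range_inj strictMono_id).1 hrange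
  ext a
  have h2 : e' a = e a := by simpa using congrFun this (e a)
  exact congrArg Fin.val h2.symm

end Aux

/-- Any two linear extensions of a finite poset can be connected by a sequence of linear
extensions in which each consecutive pair differs by transposing the positions of two
incomparable elements. -/
theorem linear_extensions_connected_by_incomparable_transpositions
    {P : Type*} [PartialOrder P] [Fintype P]
    (e e' : P ≃ Fin (Fintype.card P)) (he : IsLinExt e) (he' : IsLinExt e') :
    Relation.ReflTransGen
      (fun f g : P ≃ Fin (Fintype.card P) =>
        IsLinExt f ∧ IsLinExt g ∧
          ∃ x y : P, ¬ x ≤ y ∧ ¬ y ≤ x ∧ g = (Equiv.swap x y).trans f)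
      e e' := by
  generalize hd : (invSet e e').card = d
  induction d using Nat.strong_induction_on generalizing e with
  | _ d ih =>
    rcases Nat.eq_zero_or_pos d with h0 | hpos
    · subst h0
      rw [Finset.card_eq_zero] at hd
      rw [eq_of_invSet_empty e e' hd]
    · -- find an inversion with minimal gap
      have hne : (invSet e e').Nonempty := by
        rw [← Finset.card_pos, hd]; exact hpos
      obtain ⟨p, hp, hmin⟩ := Finset.exists_min_image (invSet e e')
        (fun p => (e p.2 : ℕ) - (e p.1 : ℕ)) hne
      obtain ⟨a, b⟩ := p
      simp only [invSet, Finset.mem_filter, Finset.mem_univ, true_and] at hp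
      obtain ⟨hab, hba'⟩ := hp
      -- claim: adjacent
      have hadj : (e b : ℕ) = (e a : ℕ) + 1 := by
        by_contra hne1
        have hab' : (e a : ℕ) < (e b : ℕ) := hab
        have h1 : (e a : ℕ) + 1 < (e b : ℕ) := by omega
        set c := e.symm ⟨(e a : ℕ) + 1, lt_trans h1 (e b).isLt⟩ with hcdef
        have hc : (e c : ℕ) = (e a : ℕ) + 1 := by simp [hcdef]
        have hca : c ≠ a := fun h => by simp [h] at hc
        have hcb : c ≠ b := fun h => by rw [h] at hc; omega
        by_cases hcase : e' c < e' a
        · have hmem : (a, c) ∈ invSet e e' := by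
            simp only [invSet, Finset.mem_filter, Finset.mem_univ, true_and]
            exact ⟨by rw [Fin.lt_def]; omega, hcase⟩
          have := hmin (a, c) hmem
          simp only at this
          omega
        · have hac' : e' a < e' c := by
            rcases lt_trichotomy (e' a) (e' c) with h | h | h
            · exact h
            · exact absurd (e'.injective h) (Ne.symm hca)
            · exact absurd h hcase
          have hmem : (c, b) ∈ invSet e e' := by
            simp only [invSet, Finset.mem_filter, Finset.mem_univ, true_and]
            exact ⟨by rw [Fin.lt_def]; omega, lt_trans hba' hac'⟩
          have := hmin (c, b) hmem
          simp only at this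
          omega
      -- a and b are incomparable
      have hne_ab : a ≠ b := fun h => by rw [h] at hab; exact lt_irrefl _ hab
      have hnab : ¬ a ≤ b := by
        intro h
        exact absurd (he' a b (lt_of_le_of_ne h hne_ab)) (asymm hba')
      have hnba : ¬ b ≤ a := by
        intro h
        exact absurd (he b a (lt_of_le_of_ne h (Ne.symm hne_ab))) (asymm hab)
      -- the swapped extension
      set e₁ : P ≃ Fin (Fintype.card P) := (Equiv.swap a b).trans e with he₁def
      have h₁a : e₁ a = e b := by simp [he₁def]
      have h₁b : e₁ b = e a := by simp [he₁def]
      have h₁o : ∀ z, z ≠ a → z ≠ b → e₁ z = e z := by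
        intro z h1 h2
        simp [he₁def, Equiv.swap_apply_of_ne_of_ne h1 h2]
      have hvne : ∀ z, z ≠ a → z ≠ b → (e z : ℕ) ≠ (e a : ℕ) ∧ (e z : ℕ) ≠ (e b : ℕ) := by
        intro z h1 h2
        constructor <;> intro h <;>
          [exact h1 (e.injective (Fin.ext h)); exact h2 (e.injective (Fin.ext h))]
      -- e₁ is a linear extension
      have he₁ : IsLinExt e₁ := by
        intro x y hxy
        have hxyne : x ≠ y := ne_of_lt hxy
        rcases eq_or_ne x a with rfl | hxa
        · rcases eq_or_ne y b with rfl | hyb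
          · exact absurd hxy.le hnab
          · have hy : e₁ y = e y := h₁o y (Ne.symm hxyne) hyb
            have h2 := he _ _ hxy
            have h3 := (hvne y (Ne.symm hxyne) hyb).2
            rw [h₁a, hy, Fin.lt_def] at *
            omega
        · rcases eq_or_ne x b with rfl | hxb
          · rcases eq_or_ne y a with rfl | hya
            · exact absurd hxy.le hnba
            · have hy : e₁ y = e y := h₁o y hya (Ne.symm hxyne)
              have h2 := he _ _ hxy
              rw [h₁b, hy, Fin.lt_def] at *
              omega
          · have hx : e₁ x = e x := h₁o x hxa hxb
            rcases eq_or_ne y a with rfl | hya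
            · have h2 := he _ _ hxy
              rw [hx, h₁a, Fin.lt_def] at *
              omega
            · rcases eq_or_ne y b with rfl | hyb
              · have h2 := he _ _ hxy
                have h3 := (hvne x hxa hxb).1
                rw [hx, h₁b, Fin.lt_def] at *
                omega
              · rw [hx, h₁o y hya hyb]
                exact he _ _ hxy
      -- key: relative order changes only on the pair (a,b)
      have hkey : ∀ x y : P, ¬(x = a ∧ y = b) → ¬(x = b ∧ y = a) →
          (e₁ x < e₁ y ↔ e x < e y) := by
        intro x y hxy1 hxy2
        rcases eq_or_ne x y with rfl | hxyne
        · simp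
        rcases eq_or_ne x a with rfl | hxa
        · have hyb : y ≠ b := fun h => hxy1 ⟨rfl, h⟩
          have hy : e₁ y = e y := h₁o y (Ne.symm hxyne) hyb
          have h3 := (hvne y (Ne.symm hxyne) hyb).2
          have h4 := (hvne y (Ne.symm hxyne) hyb).1
          rw [h₁a, hy, Fin.lt_def, Fin.lt_def]
          omega
        rcases eq_or_ne x b with rfl | hxb
        · have hya : y ≠ a := fun h => hxy2 ⟨rfl, h⟩
          have hy : e₁ y = e y := h₁o y hya (Ne.symm hxyne)
          have h3 := (hvne y hya (Ne.symm hxyne)).2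
          have h4 := (hvne y hya (Ne.symm hxyne)).1
          rw [h₁b, hy, Fin.lt_def, Fin.lt_def]
          omega
        have hx : e₁ x = e x := h₁o x hxa hxb
        rcases eq_or_ne y a with rfl | hya
        · have h3 := (hvne x hxa hxb).1
          have h4 := (hvne x hxa hxb).2
          rw [hx, h₁a, Fin.lt_def, Fin.lt_def]
          omega
        rcases eq_or_ne y b with rfl | hyb
        · have h3 := (hvne x hxa hxb).1
          have h4 := (hvne x hxa hxb).2
          rw [hx, h₁b, Fin.lt_def, Fin.lt_def]
          omega
        rw [hx, h₁o y hya hyb]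
      -- the inversion set shrinks by exactly the pair (a,b)
      have hset : invSet e₁ e' = (invSet e e').erase (a, b) := by
        ext p
        obtain ⟨x, y⟩ := p
        simp only [invSet, Finset.mem_erase, Finset.mem_filter, Finset.mem_univ, true_and,
          Ne, Prod.mk.injEq]
        constructor
        · rintro ⟨h1, h2⟩
          have hxy1 : ¬(x = a ∧ y = b) := by
            rintro ⟨rfl, rfl⟩
            rw [h₁a, h₁b] at h1
            exact asymm hab h1
          have hxy2 : ¬(x = b ∧ y = a) := by
            rintro ⟨rfl, rfl⟩
            exact asymm hba' h2
          exact ⟨hxy1, (hkey x y hxy1 hxy2).1 h1, h2⟩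
        · rintro ⟨h0, h1, h2⟩
          have hxy2 : ¬(x = b ∧ y = a) := by
            rintro ⟨rfl, rfl⟩
            exact asymm hab h1
          exact ⟨(hkey x y h0 hxy2).2 h1, h2⟩
      have hmemab : (a, b) ∈ invSet e e' := by
        simp only [invSet, Finset.mem_filter, Finset.mem_univ, true_and]
        exact ⟨hab, hba'⟩
      have hcard : (invSet e₁ e').card = d - 1 := by
        rw [hset, Finset.card_erase_of_mem hmemab, hd]
      have hrec := ih (d - 1) (by omega) e₁ he₁ hcard
      exact Relation.ReflTransGen.head ⟨he, he₁, a, b, hnab, hnba, he₁def⟩ hrec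
end

section
/- Let b̂_n(q) be the polynomial generating function counting type (B_n,1) Le-diagrams of maximal shape by number of +'s, i.e., fillings of a row of 2n-1 boxes by 0's and +'s such that if there is a 0 strictly to the right of the middle (n-th) box, then the box b immediately to its left and the conjugate box b' (the box symmetric to b about the middle) do not both contain +'s. Then for n ≥ 3, b̂_n(q) = (1+q)^2 b̂_{n-1}(q) - (1+q)q^2 b̂_{n-2}(q), with b̂_0(q)=1, b̂_1(q)=1+q, b̂_2(q) = 1+2q+2q^2+q^3. -/
attribute [local instance] Classical.propDecidable

/-- A type `(B_n,1)` Le-diagram of maximal shape: a filling of a row of `2n-1` boxes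
(0-indexed positions `0, …, 2n-2`, middle box at position `n-1`, position `p` conjugate to
position `2n-2-p`; `true` = the box contains `+`) such that if a `0` occurs strictly to the
right of the middle box, then the box immediately to its left and the conjugate of that box
do not both contain `+`'s. -/
def IsLeB1 (n : ℕ) (f : Fin (2 * n - 1) → Bool) : Prop :=
  ∀ j : ℕ, ∀ hj : j < 2 * n - 1, ∀ _hn : n ≤ j, f ⟨j, hj⟩ = false →
    ¬ (f ⟨j - 1, by omega⟩ = true ∧ f ⟨2 * n - 1 - j, by omega⟩ = true)

/-- The generating polynomial of type `(B_n,1)` Le-diagrams of maximal shape,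
weighted by `q^(number of +'s)`. -/
noncomputable def bhat (n : ℕ) : Polynomial ℤ :=
  ∑ f ∈ Finset.univ.filter (IsLeB1 n),
    Polynomial.X ^ (Finset.univ.filter (fun p => f p = true)).card

/-! Strip the two outer boxes (positions `0` and `2n`) from a diagram with `2n + 1` boxes: what
remains is a diagram with `2n - 1` boxes, and the only condition not inherited from it is that if
the last box holds `0`, the two end boxes of the inner diagram are not both `+`. Hence
`b̂_{n+1} = (1+q)² b̂_n - (1+q) e_n`, where `e_n` counts the diagrams with `2n - 1` boxes whose
end boxes both hold `+`. For those the new condition is vacuous, so `e_{n+1} = q² b̂_n`, and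
eliminating `e` gives the recurrence. -/

open Finset Polynomial

noncomputable def boxWeight (b : Bool) : ℤ[X] := if b then X else 1

noncomputable def weight {N : ℕ} (f : Fin N → Bool) : ℤ[X] := ∏ i, boxWeight (f i)

lemma X_pow_card_filter_eq_weight {N : ℕ} (f : Fin N → Bool) :
    X ^ #{p | f p = true} = weight f := by
  simp [weight, boxWeight, prod_ite]

lemma sum_weight {N : ℕ} : ∑ f : Fin N → Bool, weight f = (1 + X) ^ N := by
  simp only [weight]
  rw [← Fintype.sum_pow boxWeight N, Fintype.sum_bool, boxWeight, boxWeight, if_pos rfl,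
    if_neg Bool.false_ne_true, add_comm]

def extend {N : ℕ} (a : Bool) (f : Fin N → Bool) (b : Bool) : Fin (N + 2) → Bool :=
  Fin.cons a (Fin.snoc f b)

section extend

variable {N : ℕ} (a : Bool) (f : Fin N → Bool) (b : Bool)

lemma extend_apply_zero (h : 0 < N + 2) : extend a f b ⟨0, h⟩ = a := rfl

lemma extend_apply_last {x : ℕ} (h : x < N + 2) (hx : x = N + 1) : extend a f b ⟨x, h⟩ = b := by
  subst hx
  exact Fin.snoc_last (α := fun _ => Bool) (x := b) f

lemma extend_apply_of_eq_succ {x y : ℕ} (hx : x < N + 2) (hy : y < N) (hxy : x = y + 1) :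
    extend a f b ⟨x, hx⟩ = f ⟨y, hy⟩ := by
  subst hxy
  exact Fin.snoc_castSucc (α := fun _ => Bool) (i := ⟨y, hy⟩) b f

lemma weight_extend : weight (extend a f b) = boxWeight a * weight f * boxWeight b := by
  rw [weight, Fin.prod_univ_succ, Fin.prod_univ_castSucc]
  simp [extend, weight, mul_assoc]

end extend

lemma sum_extend {M : Type*} [AddCommMonoid M] {N : ℕ} (F : (Fin (N + 2) → Bool) → M) :
    ∑ g, F g = ∑ a, ∑ f, ∑ b, F (extend a f b) := by
  rw [← (Fin.consEquiv fun _ => Bool).sum_comp, Fintype.sum_prod_type]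
  refine Fintype.sum_congr _ _ fun a => ?_
  rw [← (Fin.snocEquiv fun _ => Bool).sum_comp, Fintype.sum_prod_type, sum_comm]
  rfl

def EndsPlus {m : ℕ} (f : Fin (2 * (m + 1) - 1) → Bool) : Prop :=
  f ⟨2 * m, by omega⟩ = true ∧ f ⟨0, by omega⟩ = true

lemma endsPlus_extend (m : ℕ) (a b : Bool) (f : Fin (2 * (m + 1) - 1) → Bool) :
    EndsPlus (m := m + 1) (extend a f b) ↔ b = true ∧ a = true := by
  rw [EndsPlus, extend_apply_last (N := 2 * (m + 1) - 1) _ _ _ _ (by omega), extend_apply_zero]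

lemma isLeB1_of_le_one {n : ℕ} (hn : n ≤ 1) (f : Fin (2 * n - 1) → Bool) : IsLeB1 n f :=
  fun j hj h => absurd hj (by omega)

/-- Every condition but the one at the new last box is a shifted condition on `f`; that one looks
at the box left of the last and its conjugate, i.e. at the two end boxes of `f`. -/
lemma isLeB1_extend_iff (m : ℕ) (a b : Bool) (f : Fin (2 * (m + 1) - 1) → Bool) :
    IsLeB1 (m + 2) (extend a f b) ↔ IsLeB1 (m + 1) f ∧ (b = false → ¬ EndsPlus f) := by
  have eval_of_le (j : ℕ) (h₁ : m + 2 ≤ j) (h₂ : j ≤ 2 * m + 1) :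
      extend a f b ⟨j, by omega⟩ = f ⟨j - 1, by omega⟩ ∧
      extend a f b ⟨j - 1, by omega⟩ = f ⟨j - 1 - 1, by omega⟩ ∧
      extend a f b ⟨2 * (m + 2) - 1 - j, by omega⟩ = f ⟨2 * (m + 1) - 1 - (j - 1), by omega⟩ :=
    ⟨extend_apply_of_eq_succ _ _ _ _ _ (by omega), extend_apply_of_eq_succ _ _ _ _ _ (by omega),
      extend_apply_of_eq_succ _ _ _ _ _ (by omega)⟩
  have eval_last : extend a f b ⟨2 * m + 2, by omega⟩ = b ∧
      extend a f b ⟨2 * m + 2 - 1, by omega⟩ = f ⟨2 * m, by omega⟩ ∧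
      extend a f b ⟨2 * (m + 2) - 1 - (2 * m + 2), by omega⟩ = f ⟨0, by omega⟩ :=
    ⟨extend_apply_last _ _ _ _ (by omega), extend_apply_of_eq_succ _ _ _ _ _ (by omega),
      extend_apply_of_eq_succ _ _ _ _ _ (by omega)⟩
  constructor
  · intro H
    refine ⟨fun i hi hn => ?_, fun hb => ?_⟩
    · obtain ⟨h₁, h₂, h₃⟩ := eval_of_le (i + 1) (by omega) (by omega)
      have := H (i + 1) (by omega) (by omega)
      rw [h₁, h₂, h₃] at this
      simpa using this
    · obtain ⟨h₁, h₂, h₃⟩ := eval_last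
      have := H (2 * m + 2) (by omega) (by omega)
      rw [h₁, h₂, h₃] at this
      exact this hb
  · rintro ⟨hf, hb⟩ j hj hn
    obtain rfl | hj' : j = 2 * m + 2 ∨ j ≤ 2 * m + 1 := by omega
    · obtain ⟨h₁, h₂, h₃⟩ := eval_last
      rw [h₁, h₂, h₃]
      exact hb
    · obtain ⟨h₁, h₂, h₃⟩ := eval_of_le j hn hj'
      rw [h₁, h₂, h₃]
      exact hf (j - 1) (by omega) (by omega)

lemma bhat_eq_sum_weight (n : ℕ) : bhat n = ∑ f, if IsLeB1 n f then weight f else 0 := by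
  simp only [bhat, X_pow_card_filter_eq_weight, sum_filter]

noncomputable def bhatEndsPlus (m : ℕ) : ℤ[X] :=
  ∑ f : Fin (2 * (m + 1) - 1) → Bool, if IsLeB1 (m + 1) f ∧ EndsPlus f then weight f else 0

lemma bhat_add_two (m : ℕ) :
    bhat (m + 2) = (1 + X) ^ 2 * bhat (m + 1) - (1 + X) * bhatEndsPlus m := by
  have outer_sum (P E : Prop) (w : ℤ[X]) :
      ∑ a, ∑ b, (if P ∧ (b = false → ¬ E) then boxWeight a * w * boxWeight b else 0) =
        (1 + X) ^ 2 * (if P then w else 0) - (1 + X) * (if P ∧ E then w else 0) := by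
    by_cases hP : P <;> by_cases hE : E <;> simp [hP, hE, boxWeight] <;> ring
  calc bhat (m + 2)
      = ∑ a, ∑ f, ∑ b, if IsLeB1 (m + 2) (extend a f b) then weight (extend a f b) else 0 := by
        rw [bhat_eq_sum_weight]
        exact sum_extend (N := 2 * (m + 1) - 1) _
    _ = ∑ f : Fin (2 * (m + 1) - 1) → Bool, ((1 + X) ^ 2 * (if IsLeB1 (m + 1) f then weight f else 0)
          - (1 + X) * (if IsLeB1 (m + 1) f ∧ EndsPlus f then weight f else 0)) := by
        rw [sum_comm]
        simp only [isLeB1_extend_iff, weight_extend, outer_sum]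
        rfl
    _ = _ := by
        rw [bhat_eq_sum_weight, bhatEndsPlus, mul_sum, mul_sum, sum_sub_distrib]

lemma bhatEndsPlus_add_one (m : ℕ) : bhatEndsPlus (m + 1) = X ^ 2 * bhat (m + 1) := by
  have outer_sum (P E : Prop) (w : ℤ[X]) :
      ∑ a, ∑ b, (if (P ∧ (b = false → ¬ E)) ∧ (b = true ∧ a = true)
        then boxWeight a * w * boxWeight b else 0) = X ^ 2 * (if P then w else 0) := by
    by_cases hP : P <;> simp [hP, boxWeight]
    ring
  calc bhatEndsPlus (m + 1)
      = ∑ a, ∑ f, ∑ b, if IsLeB1 (m + 2) (extend a f b) ∧ EndsPlus (m := m + 1) (extend a f b)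
          then weight (extend a f b) else 0 :=
        sum_extend (N := 2 * (m + 1) - 1) _
    _ = _ := by
        rw [sum_comm, bhat_eq_sum_weight, mul_sum]
        simp only [isLeB1_extend_iff, endsPlus_extend, weight_extend, outer_sum]
        rfl

lemma bhat_of_le_one {n : ℕ} (hn : n ≤ 1) : bhat n = (1 + X) ^ (2 * n - 1) := by
  simp only [bhat_eq_sum_weight, isLeB1_of_le_one hn, if_true, sum_weight]

lemma bhatEndsPlus_zero : bhatEndsPlus 0 = X := by
  rw [bhatEndsPlus, ← (Equiv.funUnique (Fin 1) Bool).symm.sum_comp]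
  simp [EndsPlus, isLeB1_of_le_one, weight, boxWeight]

/-- `b̂_n(q)` satisfies `b̂_0 = 1`, `b̂_1 = 1+q`, `b̂_2 = 1+2q+2q²+q³`, and for `n ≥ 3`
the recurrence `b̂_n = (1+q)² b̂_{n-1} − (1+q) q² b̂_{n-2}`; equivalently, `b̂_n(q)` is the
coefficient of `xⁿ` in `(1-(q+q²)x+(1-q²)x²)/(1-[2]²x+[2]x²)`. -/
theorem bhat_recurrence :
    bhat 0 = 1 ∧
    bhat 1 = 1 + Polynomial.X ∧
    bhat 2 = 1 + 2 * Polynomial.X + 2 * Polynomial.X ^ 2 + Polynomial.X ^ 3 ∧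
    ∀ n : ℕ, 3 ≤ n →
      bhat n = (1 + Polynomial.X) ^ 2 * bhat (n - 1) -
        (1 + Polynomial.X) * Polynomial.X ^ 2 * bhat (n - 2) := by
  have bhat_one : bhat 1 = 1 + X := by simpa using bhat_of_le_one le_rfl
  refine ⟨by simpa using bhat_of_le_one zero_le_one, bhat_one, ?_, fun n hn => ?_⟩
  · rw [bhat_add_two 0, bhat_one, bhatEndsPlus_zero]
    ring
  · obtain ⟨m, rfl⟩ : ∃ m, n = m + 1 + 2 := ⟨n - 3, by omega⟩
    rw [bhat_add_two, bhatEndsPlus_add_one, show m + 1 + 2 - 1 = m + 1 + 1 from rfl,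
      show m + 1 + 2 - 2 = m + 1 from rfl]
    ring
end

section
/- Let B(n) be the number of type B decorated permutations on {±1,...,±n}, i.e., signed permutations with each fixed point colored by one of two colors such that π(i)=i is colored clockwise iff π(-i)=-i is colored counterclockwise. Then B(n) = Σ_{k=0}^{n} C(n,k) · 2^{n-k}(n-k)!, and B satisfies B(0)=1 and B(n+1) = 2(n+1)B(n) + 1. -/
/-!
Write `{±1, …, ±n}` as `Bool × Fin n`, with negation flipping the `Bool`. A signed permutation is
then `(b, a) ↦ (s a xor b, p a)` for a permutation `p` of `Fin n` and signs `s`; its fixed points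
come in pairs `(false, a), (true, a)` with `p a = a` and `s a = false`, and a decoration is a free
colour for each such pair. Recording a sign and a colour for every `a`, the colour being forced to
`false` unless `a` is such a fixed point, each `a` contributes `3` choices if `p a = a` and `2`
otherwise. Expanding `∏ₐ (2 + [p a = a])` over the sets `S` of fixed points and counting the
permutations fixing `S` pointwise gives `∑_S 2^(n-|S|) (n-|S|)!`, which is the formula; the
recurrence then follows from `C(n+1,k) (n+1-k) = (n+1) C(n,k)`.
-/

open Finset Equiv
open scoped Nat

/-- The number of type `B` decorated permutations on `{±1, …, ±n}`.
We model `{-n, …, -1, 1, …, n}` by `Fin (2*n)` with negation `Fin.rev`.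
A type `B` decorated permutation is a signed permutation `π` (i.e. `π(-i) = -π(i)`)
together with a 2-coloring of its fixed points (`true` = clockwise) such that `i` is a
clockwise fixed point iff `-i` is a counterclockwise fixed point; the coloring is recorded
as a Boolean function vanishing off the fixed points. -/
noncomputable def BDecCount (n : ℕ) : ℕ :=
  Nat.card {pd : Equiv.Perm (Fin (2 * n)) × (Fin (2 * n) → Bool) //
    (∀ i, pd.1 i.rev = (pd.1 i).rev) ∧
    (∀ i, pd.1 i ≠ i → pd.2 i = false) ∧
    (∀ i, pd.1 i = i → pd.2 i.rev = ! pd.2 i)}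

namespace TypeB

section Transport

variable {X Y : Type*}

def IsDecorated (ν : X → X) (π : Perm X) (d : X → Bool) : Prop :=
  (∀ x, π (ν x) = ν (π x)) ∧ (∀ x, π x ≠ x → d x = false) ∧ (∀ x, π x = x → d (ν x) = !d x)

abbrev Decorated (ν : X → X) := {pd : Perm X × (X → Bool) // IsDecorated ν pd.1 pd.2}

lemma BDecCount_eq_card_decorated (n : ℕ) :
    BDecCount n = Nat.card (Decorated (@Fin.rev (2 * n))) := rfl

lemma isDecorated_permCongr_iff (e : X ≃ Y) {ν : X → X} {μ : Y → Y}
    (he : ∀ x, e (ν x) = μ (e x)) (π : Perm X) (d : X → Bool) :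
    IsDecorated μ (e.permCongr π) (d ∘ e.symm) ↔ IsDecorated ν π d := by
  simp only [IsDecorated, e.surjective.forall, permCongr_apply, Function.comp_apply, ← he,
    symm_apply_apply, e.apply_eq_iff_eq, ne_eq]

def decoratedCongr (e : X ≃ Y) {ν : X → X} {μ : Y → Y} (he : ∀ x, e (ν x) = μ (e x)) :
    Decorated ν ≃ Decorated μ :=
  (e.permCongr.prodCongr (e.arrowCongr (Equiv.refl Bool))).subtypeEquiv fun pd =>
    (isDecorated_permCongr_iff e he pd.1 pd.2).symm

end Transport

section SignedPerm

variable {α : Type*}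

def signFlip (x : Bool × α) : Bool × α := (!x.1, x.2)

def signedPerm (p : Perm α) (s : α → Bool) : Perm (Bool × α) where
  toFun x := (xor (s x.2) x.1, p x.2)
  invFun y := (xor (s (p.symm y.2)) y.1, p.symm y.2)
  left_inv x := by simp
  right_inv y := by simp

@[simp]
lemma signedPerm_apply (p : Perm α) (s : α → Bool) (b : Bool) (a : α) :
    signedPerm p s (b, a) = (xor (s a) b, p a) := rfl

lemma signedPerm_apply_eq_self_iff (p : Perm α) (s : α → Bool) (b : Bool) (a : α) :
    signedPerm p s (b, a) = (b, a) ↔ p a = a ∧ s a = false := by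
  cases b <;> cases h : s a <;> simp [h]

lemma exists_eq_signedPerm [Finite α] (σ : Perm (Bool × α))
    (hσ : ∀ x, σ (signFlip x) = signFlip (σ x)) : ∃ p s, σ = signedPerm p s := by
  have hinj : Function.Injective fun a => (σ (false, a)).2 := by
    intro a a' h
    obtain hb | hb := Bool.eq_or_eq_not (σ (false, a)).1 (σ (false, a')).1
    · exact congrArg Prod.snd (σ.injective (Prod.ext hb h))
    · have h' : σ (true, a') = σ (false, a) := (hσ (false, a')).trans (Prod.ext hb.symm h.symm)
      simpa using σ.injective h'
  refine ⟨.ofBijective _ (Finite.injective_iff_bijective.1 hinj), fun a => (σ (false, a)).1, ?_⟩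
  ext ⟨_ | _, a⟩ : 1
  · simp
  · simpa [signFlip] using hσ (false, a)

variable [DecidableEq α]

def decoration (p : Perm α) (f : α → Bool × Bool) (x : Bool × α) : Bool :=
  if p x.2 = x.2 ∧ (f x.2).1 = false then xor x.1 (f x.2).2 else false

lemma isDecorated_signedPerm (p : Perm α) (f : α → Bool × Bool) :
    IsDecorated signFlip (signedPerm p (Prod.fst ∘ f)) (decoration p f) := by
  refine ⟨fun x => by simp [signFlip, signedPerm], fun ⟨b, a⟩ hx => ?_, fun ⟨b, a⟩ hx => ?_⟩
  · rw [Ne, signedPerm_apply_eq_self_iff, Function.comp_apply] at hx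
    simp [decoration, hx]
  · rw [signedPerm_apply_eq_self_iff, Function.comp_apply] at hx
    simp [decoration, signFlip, hx]

variable (α) in
def DecorationData : Type _ :=
  {t : Perm α × (α → Bool × Bool) // ∀ a, (t.2 a).2 = true → t.1 a = a ∧ (t.2 a).1 = false}

namespace DecorationData

def toDecorated (t : DecorationData α) : Decorated (signFlip (α := α)) :=
  ⟨(signedPerm t.1.1 (Prod.fst ∘ t.1.2), decoration t.1.1 t.1.2), isDecorated_signedPerm _ _⟩

lemma toDecorated_injective : Function.Injective (toDecorated (α := α)) := by
  rintro ⟨⟨p, f⟩, hf⟩ ⟨⟨p', f'⟩, hf'⟩ h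
  simp only [toDecorated, Subtype.mk.injEq, Prod.mk.injEq] at h
  obtain ⟨hσ, hd⟩ := h
  have hps : ∀ a, (f a).1 = (f' a).1 ∧ p a = p' a := fun a => by
    simpa using congrArg (· (false, a)) hσ
  obtain rfl : p = p' := Equiv.ext fun a => (hps a).2
  have hc : ∀ a, (f a).2 = (f' a).2 := fun a => by
    by_cases h : p a = a ∧ (f a).1 = false
    · simpa [decoration, h, ← (hps a).1] using congrFun hd (false, a)
    · rw [Bool.eq_false_iff.2 fun hc => h (hf a hc),
        Bool.eq_false_iff.2 fun hc => h ((hps a).1 ▸ hf' a hc)]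
  exact Subtype.ext (Prod.ext rfl (funext fun a => Prod.ext (hps a).1 (hc a)))

lemma toDecorated_surjective [Finite α] : Function.Surjective (toDecorated (α := α)) := by
  rintro ⟨⟨σ, d⟩, hσ, hoff, hfix⟩
  obtain ⟨p, s, rfl⟩ := exists_eq_signedPerm σ hσ
  have hoff' : ∀ b a, ¬(p a = a ∧ s a = false) → d (b, a) = false := fun b a h =>
    hoff (b, a) (by rwa [Ne, signedPerm_apply_eq_self_iff])
  refine ⟨⟨(p, fun a => (s a, d (false, a))), fun a hc => ?_⟩, ?_⟩
  · by_contra h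
    simp [hoff' false a h] at hc
  · refine Subtype.ext (Prod.ext rfl (funext fun ⟨b, a⟩ => ?_))
    by_cases h : p a = a ∧ s a = false
    · have := hfix (false, a) ((signedPerm_apply_eq_self_iff ..).2 h)
      cases b <;> simp_all [toDecorated, decoration, signFlip]
    · simp [toDecorated, decoration, h, hoff' b a h]

lemma card_eq_sum_prod [Fintype α] :
    Nat.card (DecorationData α) = ∑ p : Perm α, ∏ a, if p a = a then 3 else 2 := by
  have hfibre (P : Prop) [Decidable P] :
      Nat.card {sc : Bool × Bool // sc.2 = true → P ∧ sc.1 = false} = if P then 3 else 2 := by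
    by_cases h : P <;> simp [h, Nat.card_eq_fintype_card] <;> rfl
  let e : DecorationData α ≃
      Σ p : Perm α, ∀ a, {sc : Bool × Bool // sc.2 = true → p a = a ∧ sc.1 = false} :=
    (subtypeProdEquivSigmaSubtype fun (p : Perm α) (f : α → Bool × Bool) =>
        ∀ a, (f a).2 = true → p a = a ∧ (f a).1 = false).trans
      (sigmaCongrRight fun p => subtypePiEquivPi (β := fun _ => Bool × Bool)
        (p := fun a sc => sc.2 = true → p a = a ∧ sc.1 = false))
  rw [Nat.card_congr e, Nat.card_sigma]
  simp only [Nat.card_pi, hfibre]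

end DecorationData

lemma card_decorated_signFlip [Fintype α] :
    Nat.card (Decorated (signFlip (α := α))) = ∑ p : Perm α, ∏ a, if p a = a then 3 else 2 := by
  rw [← DecorationData.card_eq_sum_prod, Nat.card_eq_of_bijective _
    ⟨DecorationData.toDecorated_injective, DecorationData.toDecorated_surjective⟩]

end SignedPerm

def boolProdFinEquiv (n : ℕ) : Bool × Fin n ≃ Fin (2 * n) :=
  (boolProdEquivSum (Fin n)).trans <| (sumCongr (Equiv.refl _) Fin.revPerm).trans <|
    finSumFinEquiv.trans (finCongr (two_mul n).symm)

lemma boolProdFinEquiv_signFlip (n : ℕ) (x : Bool × Fin n) :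
    boolProdFinEquiv n (signFlip x) = (boolProdFinEquiv n x).rev := by
  obtain ⟨_ | _, a⟩ := x <;> ext <;> simp [boolProdFinEquiv, signFlip] <;> omega

end TypeB

namespace Equiv.Perm

variable {α : Type*} [Fintype α] [DecidableEq α]

lemma card_filter_forall_mem_apply_eq_self (S : Finset α) :
    #{p : Perm α | ∀ a ∈ S, p a = a} = (Fintype.card α - #S)! := by
  have : ({p : Perm α | ∀ a ∈ S, p a = a} : Finset _) = permsOfFinset Sᶜ := by
    ext p
    simp only [mem_filter, mem_univ, true_and, mem_perms_of_finset_iff, mem_compl]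
    exact ⟨fun h a => mt (h a), fun h a => not_imp_not.1 (h (x := a))⟩
  rw [this, card_perms_of_finset, card_compl]

lemma sum_prod_ite_apply_eq_self {R : Type*} [CommSemiring R] (y : R) :
    ∑ p : Perm α, ∏ a, (if p a = a then y + 1 else y) =
      ∑ k ∈ range (Fintype.card α + 1),
        (Fintype.card α).choose k * (y ^ (Fintype.card α - k) * (Fintype.card α - k)!) := by
  have hprod (p : Perm α) : ∏ a, (if p a = a then y + 1 else y) =
      ∑ S ∈ (univ : Finset α).powerset,
        (if ∀ a ∈ S, p a = a then 1 else 0) * y ^ (Fintype.card α - #S) :=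
    calc ∏ a, (if p a = a then y + 1 else y) = ∏ a, ((if p a = a then 1 else 0) + y) :=
          prod_congr rfl fun a _ => by split_ifs <;> simp [add_comm]
      _ = _ := prod_add _ _ _
      _ = _ := sum_congr rfl fun S _ => by
          rw [prod_boole, prod_const, card_sdiff_of_subset (subset_univ S), card_univ]; congr
  simp_rw [hprod]
  rw [sum_comm]
  simp_rw [← sum_mul, sum_boole, card_filter_forall_mem_apply_eq_self]
  rw [← card_univ, sum_powerset_apply_card (fun k => ((#univ - k)! : R) * y ^ (#univ - k))]
  simp [nsmul_eq_mul, mul_comm]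

end Equiv.Perm

lemma Nat.sum_choose_mul_two_pow_mul_factorial_succ (n : ℕ) :
    ∑ k ∈ range (n + 2), (n + 1).choose k * (2 ^ (n + 1 - k) * (n + 1 - k)!) =
      2 * (n + 1) * ∑ k ∈ range (n + 1), n.choose k * (2 ^ (n - k) * (n - k)!) + 1 := by
  rw [sum_range_succ, mul_sum]
  congr 1
  · refine sum_congr rfl fun k hk => ?_
    obtain ⟨j, rfl⟩ := Nat.exists_eq_add_of_le (Nat.lt_succ_iff.1 (mem_range.1 hk))
    have h := Nat.choose_mul_succ_eq (k + j) k
    rw [show k + j + 1 - k = j + 1 by omega] at h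
    rw [show k + j + 1 - k = j + 1 by omega, Nat.add_sub_cancel_left, pow_succ, Nat.factorial_succ]
    calc _ = 2 * (2 ^ j * j !) * ((k + j + 1).choose k * (j + 1)) := by ring
      _ = _ := by rw [← h]; ring
  · simp

/-- `B(n) = Σ_{k=0}^n C(n,k)·2^{n-k}(n-k)!` (choose the clockwise fixed points among the
positive letters, then a signed permutation of the rest), with `B(0) = 1` and the
recurrence `B(n+1) = 2(n+1)B(n) + 1`. -/
theorem BDecCount_formula :
    (∀ n : ℕ, BDecCount n =
      ∑ k ∈ Finset.range (n + 1),
        n.choose k * (2 ^ (n - k) * Nat.factorial (n - k))) ∧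
    BDecCount 0 = 1 ∧
    ∀ n : ℕ, BDecCount (n + 1) = 2 * (n + 1) * BDecCount n + 1 := by
  have hformula (n : ℕ) : BDecCount n =
      ∑ k ∈ range (n + 1), n.choose k * (2 ^ (n - k) * (n - k)!) := by
    rw [TypeB.BDecCount_eq_card_decorated, ← Nat.card_congr (TypeB.decoratedCongr
      (TypeB.boolProdFinEquiv n) (TypeB.boolProdFinEquiv_signFlip n)),
      TypeB.card_decorated_signFlip]
    simpa using Equiv.Perm.sum_prod_ite_apply_eq_self (α := Fin n) (2 : ℕ)
  refine ⟨hformula, by simp [hformula], fun n => ?_⟩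
  rw [hformula, hformula, Nat.sum_choose_mul_two_pow_mul_factorial_succ]
end

section
/- The sequence B(n) defined by B(n) = Σ_{k=0}^{n} C(n,k) 2^{n-k}(n-k)! satisfies the recurrence B(n+1) = 2(n+1)B(n) + 1 with B(0) = 1. -/
/-- `B(n) = Σ_{k=0}^n C(n,k)·2^{n-k}(n-k)!`, where `2^{n-k}(n-k)!` is the number of
signed permutations on `n-k` letters. -/
def Bsum (n : ℕ) : ℕ :=
  ∑ k ∈ Finset.range (n + 1), n.choose k * (2 ^ (n - k) * Nat.factorial (n - k))

lemma Bsum_eq (n : ℕ) : Bsum n = ∑ j ∈ Finset.range (n + 1), n.descFactorial j * 2 ^ j := by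
  rw [Bsum, ← Finset.sum_range_reflect]
  apply Finset.sum_congr rfl
  intro k hk
  rw [Finset.mem_range] at hk
  have hk' : k ≤ n := Nat.lt_succ_iff.mp hk
  have : n + 1 - 1 - k = n - k := by omega
  rw [this, Nat.descFactorial_eq_factorial_mul_choose, Nat.choose_symm hk', Nat.sub_sub_self hk']
  ring

/-- The sequence `B(n) = Σ_{k=0}^n C(n,k) 2^{n-k}(n-k)!` satisfies `B(0) = 1` and the
recurrence `B(n+1) = 2(n+1)B(n) + 1`. -/
theorem Bsum_recurrence :
    Bsum 0 = 1 ∧ ∀ n : ℕ, Bsum (n + 1) = 2 * (n + 1) * Bsum n + 1 := by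
  constructor
  · rfl
  · intro n
    rw [Bsum_eq, Bsum_eq, Finset.sum_range_succ', Finset.mul_sum]
    simp only [Nat.succ_descFactorial_succ, Nat.descFactorial_zero, pow_succ, pow_zero]
    congr 1
    apply Finset.sum_congr rfl
    intro i _
    ring
end

section
/- The number of type B_n permutation tableaux equals 2^n · n!. -/
/-!
Weight a tableau by `t ^ u`, where `u` counts its unrestricted rows (rows without a `0` lying
above a `+` or on the diagonal), and let `N_n(t)` be the total weight in size `n`. A tableau of
size `n + 1` either has an empty row `0`, whose deletion leaves a tableau of size `n` with one
unrestricted row fewer, or a first column of full height `n + 1`. Deleting that column leaves a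
tableau of size `n` with `u` unrestricted rows, and the `+`'s of the column form a nonempty subset
`S` of the `u + 1` free rows (the unrestricted rows and the new diagonal row `n`). Summing over
`S` with min-induction gives `t ^ (u + 1) + ∑_S t ^ u(S) = 2t (t + 1) ^ u`, hence
`N_{n+1}(t) = 2t N_n(t + 1)`, `N_n(t) = 2 ^ n t (t + 1) ⋯ (t + n - 1)` and `N_n(1) = 2 ^ n n!`.
-/

/-- A shape (order ideal) inside the type `B_n` staircase `(n, n-1, …, 1)`:
`μ i` is the length of row `i` (row `0` is the longest possible row, of length `n`;
row `n-1` is the single-box row containing the minimal box). The ideal condition is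
`min (μ i) (n - (i+1)) ≤ μ (i+1)`. -/
def IsShapeB (n : ℕ) (μ : ℕ → ℕ) : Prop :=
  (∀ i, i < n → μ i ≤ n - i) ∧ (∀ i, n ≤ i → μ i = 0) ∧
  ∀ i, i + 1 < n → min (μ i) (n - (i + 1)) ≤ μ (i + 1)

/-- The type `(B_n, n)` Le-conditions for a filling `D` (`true` = `+`) of the shape `μ`:
(1) if a `0` lies above a `+` in the same column, then all boxes to its left in its row
are `0`'s; (2) if a diagonal box (the box in column `n-1-i` of row `i`) contains a `0`,
then all boxes to its left in its row are `0`'s. -/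
def LeCondB (n : ℕ) (μ : ℕ → ℕ) (D : ℕ → ℕ → Bool) : Prop :=
  (∀ i j, j < μ i → D i j = false →
    (∃ i', i < i' ∧ j < μ i' ∧ D i' j = true) →
    ∀ j', j' < j → D i j' = false) ∧
  (∀ i, i < n → μ i = n - i → D i (n - i - 1) = false →
    ∀ j', j' < n - i - 1 → D i j' = false)

/-- A type `B_n` permutation tableau: a type `(B_n, n)` Le-diagram with no all-zero
column. The filling is normalized to be `false` outside the shape. -/
def IsPermTabB (n : ℕ) (μ : ℕ → ℕ) (D : ℕ → ℕ → Bool) : Prop :=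
  IsShapeB n μ ∧ (∀ i j, ¬ j < μ i → D i j = false) ∧ LeCondB n μ D ∧
  ∀ j, (∃ i, j < μ i) → ∃ i, j < μ i ∧ D i j = true

open Finset
open scoped Classical

/-- The free rows in `F` that stay unrestricted once a new first column with `+`'s exactly in the
rows `S` is added, `m` being the row of the new diagonal box. -/
def keptFree (m : ℕ) (F S : Finset ℕ) : Finset ℕ :=
  F.filter fun i => i ∈ S ∨ (i ≠ m ∧ ∀ j ∈ S, j ≤ i)

theorem sum_powerset_eq_add_sum_filter_nonempty {α β : Type*} [DecidableEq α] [AddCommMonoid β]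
    (s : Finset α) (f : Finset α → β) :
    ∑ S ∈ s.powerset, f S = f ∅ + ∑ S ∈ s.powerset with S.Nonempty, f S := by
  rw [← sum_filter_add_sum_filter_not _ Finset.Nonempty, add_comm]
  congr
  simp [not_nonempty_iff_eq_empty, filter_eq']

section keptFree

variable {m a : ℕ} {F S : Finset ℕ}

theorem card_keptFree_empty (hm : m ∈ F) : #(keptFree m F ∅) = #F - 1 := by
  simp [keptFree, filter_ne', card_erase_of_mem hm]

theorem keptFree_insert_insert (ha : ∀ i ∈ F, a < i) :
    keptFree m (insert a F) (insert a S) = insert a (keptFree m F S) := by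
  rw [keptFree, filter_insert, if_pos (Or.inl (mem_insert_self a S))]
  congr 1
  refine filter_congr fun i hi => ?_
  have := ha i hi
  simp only [mem_insert, forall_eq_or_imp]
  grind

theorem keptFree_insert (ha : ∀ j ∈ S, a < j) (hne : S.Nonempty) :
    keptFree m (insert a F) S = keptFree m F S := by
  obtain ⟨j, hj⟩ := hne
  have := ha j hj
  rw [keptFree, filter_insert, if_neg (by grind)]
  rfl

theorem sum_pow_card_keptFree_insert (t : ℕ) (ha : ∀ i ∈ F, a < i) :
    ∑ S ∈ (insert a F).powerset with S.Nonempty, t ^ #(keptFree m (insert a F) S) =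
      t * ∑ S ∈ F.powerset, t ^ #(keptFree m F S) +
        ∑ S ∈ F.powerset with S.Nonempty, t ^ #(keptFree m F S) := by
  have haF : a ∉ F := fun h => lt_irrefl a (ha a h)
  rw [sum_filter, sum_powerset_insert haF, ← sum_filter, mul_sum, add_comm]
  congr 1
  · refine sum_congr rfl fun S _ => ?_
    rw [if_pos (insert_nonempty a S), keptFree_insert_insert ha, card_insert_of_notMem, pow_succ']
    exact fun h => haF (mem_filter.1 h).1
  · refine sum_congr rfl fun S hS => ?_
    rw [mem_filter, mem_powerset] at hS
    rw [keptFree_insert (fun j hj => ha j (hS.1 hj)) hS.2]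

theorem pow_card_add_sum_pow_card_keptFree (t : ℕ) (hm : m ∈ F) (hmax : ∀ i ∈ F, i ≤ m) :
    t ^ #F + ∑ S ∈ F.powerset with S.Nonempty, t ^ #(keptFree m F S) =
      2 * t * (t + 1) ^ (#F - 1) := by
  induction F using Finset.induction_on_min with
  | empty => simp at hm
  | insert a F ha ih =>
    have haF : a ∉ F := fun h => lt_irrefl a (ha a h)
    rw [sum_pow_card_keptFree_insert t ha, card_insert_of_notMem haF]
    rcases F.eq_empty_or_nonempty with rfl | ⟨b, hb⟩
    · simp [keptFree, filter_singleton]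
      ring
    have hmF : m ∈ F := by
      refine (mem_insert.1 hm).resolve_left ?_
      rintro rfl
      exact absurd (hmax b (mem_insert_of_mem hb)) (not_le.2 (ha b hb))
    obtain ⟨k, hk⟩ : ∃ k, #F = k + 1 := ⟨#F - 1, by have := card_pos.2 ⟨b, hb⟩; omega⟩
    have ih := ih hmF fun i hi => hmax i (mem_insert_of_mem hi)
    rw [hk, Nat.add_sub_cancel] at ih
    rw [sum_powerset_eq_add_sum_filter_nonempty, card_keptFree_empty hmF, hk, Nat.add_sub_cancel,
      Nat.add_sub_cancel]
    calc _ = (t + 1) * (t ^ (k + 1) + ∑ S ∈ F.powerset with S.Nonempty, t ^ #(keptFree m F S)) := by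
          ring
      _ = _ := by rw [ih]; ring

end keptFree

/-- The `0` in box `(i, j)` lies above a `+` of its column or on the diagonal `i + j + 1 = n`,
so the Le-conditions force `0`'s to its left. -/
def IsRestrictingZero (n : ℕ) (μ : ℕ → ℕ) (D : ℕ → ℕ → Bool) (i j : ℕ) : Prop :=
  j < μ i ∧ D i j = false ∧ ((∃ i', i < i' ∧ D i' j = true) ∨ i + j + 1 = n)

def IsRestrictedRow (n : ℕ) (μ : ℕ → ℕ) (D : ℕ → ℕ → Bool) (i : ℕ) : Prop :=
  ∃ j, IsRestrictingZero n μ D i j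

noncomputable def unrestrictedRows (n : ℕ) (μ : ℕ → ℕ) (D : ℕ → ℕ → Bool) : Finset ℕ :=
  (range n).filter fun i => ¬ IsRestrictedRow n μ D i

/-- The rows that may carry a `+` in a new first column of height `n + 1`: the unrestricted rows
and row `n`, whose box in the new column is diagonal. -/
noncomputable def freeRows (n : ℕ) (μ : ℕ → ℕ) (D : ℕ → ℕ → Bool) : Finset ℕ :=
  (range (n + 1)).filter fun i => ¬ IsRestrictedRow n μ D i

def firstColumn (n : ℕ) (D : ℕ → ℕ → Bool) : Finset ℕ :=
  (range (n + 1)).filter fun i => D i 0 = true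

def extendShape (n : ℕ) (μ : ℕ → ℕ) (i : ℕ) : ℕ := if i ≤ n then μ i + 1 else 0

def extendFilling (S : Finset ℕ) (D : ℕ → ℕ → Bool) : ℕ → ℕ → Bool
  | i, 0 => decide (i ∈ S)
  | i, j + 1 => D i j

section Tableau

variable {n : ℕ} {μ : ℕ → ℕ} {D : ℕ → ℕ → Bool}

theorem isPermTabB_iff :
    IsPermTabB n μ D ↔ IsShapeB n μ ∧ (∀ i j, D i j = true → j < μ i) ∧
      (∀ i j, IsRestrictingZero n μ D i j → ∀ j' < j, D i j' = false) ∧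
      (∀ i j, j < μ i → ∃ i', D i' j = true) := by
  unfold IsPermTabB LeCondB IsRestrictingZero
  refine and_congr_right fun hshape => ?_
  rw [show (∀ i j, ¬ j < μ i → D i j = false) ↔ ∀ i j, D i j = true → j < μ i by grind]
  refine and_congr_right fun hnorm => ?_
  have hplus (i j : ℕ) : j < μ i ∧ D i j = true ↔ D i j = true := and_iff_right_of_imp (hnorm i j)
  simp only [hplus, and_imp, or_imp, forall_and, forall_exists_index]
  refine and_congr (and_congr_right fun _ => ?_) forall_comm
  obtain ⟨hle, hzero, -⟩ := hshape
  constructor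
  · intro h i j hj hD hdiag j' hj'
    have hμ : μ i = n - i := by have := hle i (by omega); omega
    exact h i (by omega) hμ (by rwa [show n - i - 1 = j by omega]) j' (by omega)
  · intro h i hi hμ hD
    exact h i (n - i - 1) (by omega) hD (by omega)

theorem IsPermTabB.shape_eq_zero (h : IsPermTabB n μ D) {i : ℕ} (hi : n ≤ i) : μ i = 0 :=
  h.1.2.1 i hi

theorem IsPermTabB.filling_eq_false (h : IsPermTabB n μ D) {i j : ℕ} (hj : μ i ≤ j) :
    D i j = false :=
  h.2.1 i j (not_lt.2 hj)

theorem IsShapeB.pos_of_pos_zero (h : IsShapeB (n + 1) μ) (h0 : 0 < μ 0) : ∀ i ≤ n, 0 < μ i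
  | 0, _ => h0
  | i + 1, hi => by
    have := h.2.2 i (by omega)
    have := h.pos_of_pos_zero h0 i (by omega)
    omega

theorem not_isRestrictingZero_of_le {i j : ℕ} (h : μ i ≤ j) : ¬ IsRestrictingZero n μ D i j :=
  fun hz => absurd hz.1 (not_lt.2 h)

theorem not_isRestrictedRow_of_eq_zero {i : ℕ} (h : μ i = 0) : ¬ IsRestrictedRow n μ D i :=
  fun ⟨_, hj⟩ => not_isRestrictingZero_of_le (by simp [h]) hj

theorem le_of_mem_freeRows {i : ℕ} (hi : i ∈ freeRows n μ D) : i ≤ n := by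
  simp only [freeRows, mem_filter, mem_range] at hi
  omega

theorem mem_freeRows_self (hn : μ n = 0) : n ∈ freeRows n μ D := by
  simpa [freeRows] using not_isRestrictedRow_of_eq_zero hn

theorem card_freeRows (hn : μ n = 0) : #(freeRows n μ D) = #(unrestrictedRows n μ D) + 1 := by
  rw [freeRows, range_add_one, filter_insert, if_pos (not_isRestrictedRow_of_eq_zero hn),
    card_insert_of_notMem (by simp)]
  rfl

theorem mem_firstColumn (hD : ∀ i, n < i → D i 0 = false) {i : ℕ} :
    i ∈ firstColumn n D ↔ D i 0 = true := by
  simp only [firstColumn, mem_filter, mem_range, and_iff_right_iff_imp]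
  intro h
  by_contra hi
  simp [hD i (by omega)] at h

theorem firstColumn_subset_freeRows_iff (hD : ∀ i, n < i → D i 0 = false) {μ' : ℕ → ℕ}
    {D' : ℕ → ℕ → Bool} :
    firstColumn n D ⊆ freeRows n μ' D' ↔ ∀ i, IsRestrictedRow n μ' D' i → D i 0 = false := by
  simp only [subset_iff, mem_firstColumn hD, freeRows, mem_filter, mem_range]
  refine ⟨fun h i hi => ?_, fun h i hi0 => ⟨?_, fun hr => by simp [h i hr] at hi0⟩⟩
  · by_contra hi0
    exact (h (by simpa using hi0)).2 hi
  · by_contra hi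
    simp [hD i (by omega)] at hi0

theorem firstColumn_nonempty_iff (hD : ∀ i, n < i → D i 0 = false) :
    (firstColumn n D).Nonempty ↔ ∃ i, D i 0 = true := by
  simp only [Finset.Nonempty, mem_firstColumn hD]

/-! ### Deleting an empty row `0` -/

theorem isShapeB_succ_iff_dropRow (h0 : μ 0 = 0) :
    IsShapeB (n + 1) μ ↔ IsShapeB n (fun i => μ (i + 1)) := by
  simp only [IsShapeB]
  constructor
  · rintro ⟨hle, hzero, hmin⟩
    refine ⟨fun i hi => ?_, fun i hi => hzero (i + 1) (by omega), fun i hi => ?_⟩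
    · have := hle (i + 1) (by omega); omega
    · have := hmin (i + 1) (by omega); omega
  · rintro ⟨hle, hzero, hmin⟩
    refine ⟨fun i hi => ?_, fun i hi => ?_, fun i hi => ?_⟩
    · cases i with
      | zero => omega
      | succ i => have := hle i (by omega); omega
    · obtain ⟨i, rfl⟩ := Nat.exists_eq_add_of_le' (show 1 ≤ i by omega)
      exact hzero i (by omega)
    · cases i with
      | zero => omega
      | succ i => have := hmin i (by omega); omega

theorem isRestrictingZero_succ_iff_dropRow {i j : ℕ} :
    IsRestrictingZero (n + 1) μ D (i + 1) j ↔
      IsRestrictingZero n (fun i => μ (i + 1)) (fun i => D (i + 1)) i j := by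
  have hbelow : (∃ i', i + 1 < i' ∧ D i' j = true) ↔ ∃ i', i < i' ∧ D (i' + 1) j = true :=
    ⟨fun ⟨i', hi', h⟩ => ⟨i' - 1, by omega, by rwa [Nat.sub_add_cancel (by omega)]⟩,
      fun ⟨i', hi', h⟩ => ⟨i' + 1, by omega, h⟩⟩
  simp only [IsRestrictingZero, hbelow, show i + 1 + j + 1 = n + 1 ↔ i + j + 1 = n by omega]

theorem isPermTabB_succ_iff_dropRow (h0 : μ 0 = 0) (hD0 : ∀ j, D 0 j = false) :
    IsPermTabB (n + 1) μ D ↔ IsPermTabB n (fun i => μ (i + 1)) (fun i => D (i + 1)) := by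
  rw [isPermTabB_iff, isPermTabB_iff, isShapeB_succ_iff_dropRow h0]
  have hplus (j : ℕ) : (∃ i', D i' j = true) ↔ ∃ i', D (i' + 1) j = true := by
    rw [← Nat.or_exists_add_one]
    simp [hD0]
  refine and_congr_right fun _ => and_congr ?_ (and_congr ?_ ?_) <;>
    rw [← Nat.and_forall_add_one]
  · simp [hD0]
  · simp [isRestrictingZero_succ_iff_dropRow, not_isRestrictingZero_of_le, h0]
  · simp [hplus, h0]

theorem card_unrestrictedRows_succ_dropRow (h0 : μ 0 = 0) :
    #(unrestrictedRows (n + 1) μ D) =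
      #(unrestrictedRows n (fun i => μ (i + 1)) (fun i => D (i + 1))) + 1 := by
  rw [unrestrictedRows, unrestrictedRows, card_filter, card_filter, sum_range_succ',
    if_pos (not_isRestrictedRow_of_eq_zero h0)]
  simp only [IsRestrictedRow, isRestrictingZero_succ_iff_dropRow]
  congr

/-! ### Deleting a full column `0` -/

theorem isShapeB_succ_iff_dropColumn (hpos : ∀ i ≤ n, 0 < μ i) (hzero : ∀ i, n < i → μ i = 0) :
    IsShapeB (n + 1) μ ↔ IsShapeB n (fun i => μ i - 1) := by
  simp only [IsShapeB]
  constructor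
  · rintro ⟨hle, -, hmin⟩
    refine ⟨fun i hi => ?_, fun i hi => ?_, fun i hi => ?_⟩
    · have := hle i (by omega); omega
    · rcases Nat.lt_or_ge n i with h | h
      · simp [hzero i h]
      · have := hle i (by omega); omega
    · have := hmin i (by omega); have := hpos (i + 1) (by omega); omega
  · rintro ⟨hle, hzero', hmin⟩
    refine ⟨fun i hi => ?_, fun i hi => hzero i (by omega), fun i hi => ?_⟩
    · rcases Nat.lt_or_ge i n with h | h
      · have := hle i h; omega
      · have := hzero' i h; omega
    · have := hpos (i + 1) (by omega)
      rcases Nat.lt_or_ge (i + 1) n with h | h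
      · have := hmin i h; omega
      · omega

theorem isRestrictingZero_succ_iff_dropColumn {i j : ℕ} :
    IsRestrictingZero (n + 1) μ D i (j + 1) ↔
      IsRestrictingZero n (fun i => μ i - 1) (fun i j => D i (j + 1)) i j := by
  simp only [IsRestrictingZero, show j + 1 < μ i ↔ j < μ i - 1 by omega,
    show i + (j + 1) + 1 = n + 1 ↔ i + j + 1 = n by omega]

theorem isRestrictedRow_succ_iff_dropColumn {i : ℕ} :
    IsRestrictedRow (n + 1) μ D i ↔ IsRestrictingZero (n + 1) μ D i 0 ∨
      IsRestrictedRow n (fun i => μ i - 1) (fun i j => D i (j + 1)) i := by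
  simp only [IsRestrictedRow, ← isRestrictingZero_succ_iff_dropColumn]
  exact Nat.or_exists_add_one.symm

theorem isPermTabB_succ_iff_dropColumn (hpos : ∀ i ≤ n, 0 < μ i)
    (hzero : ∀ i, n < i → μ i = 0) (hD : ∀ i, n < i → D i 0 = false) :
    IsPermTabB (n + 1) μ D ↔ IsPermTabB n (fun i => μ i - 1) (fun i j => D i (j + 1)) ∧
      firstColumn n D ⊆ freeRows n (fun i => μ i - 1) (fun i j => D i (j + 1)) ∧
      (firstColumn n D).Nonempty := by
  have hnorm : (∀ i j, D i j = true → j < μ i) ↔ ∀ i j, D i (j + 1) = true → j < μ i - 1 := by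
    refine forall_congr' fun i => ?_
    rw [← Nat.and_forall_add_one]
    have : D i 0 = true → 0 < μ i := fun h => hpos i (by by_contra h'; simp [hD i (by omega)] at h)
    simp only [and_iff_right this, show ∀ j, j + 1 < μ i ↔ j < μ i - 1 by omega]
  -- Nothing lies to the left of column `0`, so its own zeros impose nothing; a restricting zero
  -- further right forces a `0` in column `0` as well.
  have hle : (∀ i j, IsRestrictingZero (n + 1) μ D i j → ∀ j' < j, D i j' = false) ↔
      (∀ i, IsRestrictedRow n (fun i => μ i - 1) (fun i j => D i (j + 1)) i → D i 0 = false) ∧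
      ∀ i j, IsRestrictingZero n (fun i => μ i - 1) (fun i j => D i (j + 1)) i j →
        ∀ j' < j, D i (j' + 1) = false := by
    simp only [IsRestrictedRow, ← isRestrictingZero_succ_iff_dropColumn, forall_exists_index,
      ← forall_and]
    refine forall_congr' fun i => ?_
    rw [← Nat.and_forall_add_one]
    simp only [Nat.not_lt_zero, false_imp_iff, implies_true, true_and, Nat.forall_lt_succ_left]
  have hcol : (∀ i j, j < μ i → ∃ i', D i' j = true) ↔
      (∀ i j, j < μ i - 1 → ∃ i', D i' (j + 1) = true) ∧ ∃ i', D i' 0 = true := by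
    refine ⟨fun h => ⟨fun i j hj => h i (j + 1) (by omega), h 0 0 (hpos 0 n.zero_le)⟩, ?_⟩
    rintro ⟨h, h0⟩ i (_ | j) hj
    exacts [h0, h i j (by omega)]
  rw [isPermTabB_iff, isPermTabB_iff, isShapeB_succ_iff_dropColumn hpos hzero, hnorm, hle, hcol,
    firstColumn_subset_freeRows_iff hD, firstColumn_nonempty_iff hD]
  tauto

theorem unrestrictedRows_succ_eq_keptFree (hpos : ∀ i ≤ n, 0 < μ i)
    (hD : ∀ i, n < i → D i 0 = false) :
    unrestrictedRows (n + 1) μ D =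
      keptFree n (freeRows n (fun i => μ i - 1) (fun i j => D i (j + 1))) (firstColumn n D) := by
  ext i
  simp only [unrestrictedRows, keptFree, freeRows, mem_filter, mem_range, not_or,
    isRestrictedRow_succ_iff_dropColumn, mem_firstColumn hD]
  by_cases hi : i < n + 1
  · have hrz : ¬ IsRestrictingZero (n + 1) μ D i 0 ↔
        D i 0 = true ∨ (i ≠ n ∧ ∀ j, D j 0 = true → j ≤ i) := by
      simp only [IsRestrictingZero, hpos i (by omega), true_and]
      grind
    rw [hrz]
    tauto
  · simp [hi]

theorem dropColumn_extendShape (hμ : ∀ i, n < i → μ i = 0) :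
    (fun i => extendShape n μ i - 1) = μ := by
  ext i
  by_cases hi : i ≤ n
  · simp [extendShape, hi]
  · simp [extendShape, hi, hμ i (by omega)]

theorem extendShape_dropColumn (hpos : ∀ i ≤ n, 0 < μ i) (hzero : ∀ i, n < i → μ i = 0) :
    extendShape n (fun i => μ i - 1) = μ := by
  ext i
  by_cases hi : i ≤ n
  · simp only [extendShape, hi, if_true]
    have := hpos i hi
    omega
  · simp [extendShape, hi, hzero i (by omega)]

theorem firstColumn_extendFilling {S : Finset ℕ} (hS : ∀ i ∈ S, i ≤ n) :
    firstColumn n (extendFilling S D) = S := by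
  ext i
  simpa [firstColumn, extendFilling] using fun hi => by have := hS i hi; omega

theorem extendFilling_firstColumn (hD : ∀ i, n < i → D i 0 = false) :
    extendFilling (firstColumn n D) (fun i j => D i (j + 1)) = D := by
  ext i (_ | j)
  · by_cases hi : i ≤ n
    · simp [extendFilling, firstColumn, Nat.lt_succ_iff.2 hi]
    · simp [extendFilling, firstColumn, hD i (by omega)]
  · rfl

theorem IsPermTabB.dropColumn (h : IsPermTabB (n + 1) μ D) (h0 : μ 0 ≠ 0) :
    IsPermTabB n (fun i => μ i - 1) (fun i j => D i (j + 1)) ∧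
      firstColumn n D ⊆ freeRows n (fun i => μ i - 1) (fun i j => D i (j + 1)) ∧
      (firstColumn n D).Nonempty :=
  (isPermTabB_succ_iff_dropColumn (h.1.pos_of_pos_zero (Nat.pos_of_ne_zero h0))
    (fun _ hi => h.shape_eq_zero hi)
    (fun _ hi => h.filling_eq_false (by rw [h.shape_eq_zero hi]))).1 h

theorem IsPermTabB.extendColumn {S : Finset ℕ} (h : IsPermTabB n μ D) (hS : S ⊆ freeRows n μ D)
    (hne : S.Nonempty) : IsPermTabB (n + 1) (extendShape n μ) (extendFilling S D) := by
  have hSn (i : ℕ) (hi : i ∈ S) : i ≤ n := le_of_mem_freeRows (hS hi)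
  have hext := isPermTabB_succ_iff_dropColumn (n := n) (μ := extendShape n μ)
    (D := extendFilling S D) (fun i hi => by simp [extendShape, hi])
    (fun i hi => by simp [extendShape]; omega)
    (fun i hi => by simpa [extendFilling] using fun h => absurd (hSn i h) (by omega))
  rw [dropColumn_extendShape fun i hi => h.shape_eq_zero hi.le, firstColumn_extendFilling hSn]
    at hext
  exact hext.2 ⟨h, hS, hne⟩

end Tableau

abbrev PermTabB (n : ℕ) := {x : (ℕ → ℕ) × (ℕ → ℕ → Bool) // IsPermTabB n x.1 x.2}

namespace PermTabB

variable {n : ℕ}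

abbrev shape (T : PermTabB n) : ℕ → ℕ := T.1.1

abbrev filling (T : PermTabB n) : ℕ → ℕ → Bool := T.1.2

noncomputable def numUnrestrictedRows (T : PermTabB n) : ℕ :=
  #(unrestrictedRows n T.shape T.filling)

noncomputable abbrev firstColumnChoices (T : PermTabB n) : Finset (Finset ℕ) :=
  (freeRows n T.shape T.filling).powerset.filter Finset.Nonempty

def emptyRowEquiv (n : ℕ) : {T : PermTabB (n + 1) // T.shape 0 = 0} ≃ PermTabB n where
  toFun T := ⟨(fun i => T.1.shape (i + 1), fun i => T.1.filling (i + 1)),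
    (isPermTabB_succ_iff_dropRow T.2 fun _ => T.1.2.filling_eq_false (by simp [T.2])).1 T.1.2⟩
  invFun T := ⟨⟨(Stream'.cons 0 T.shape, Stream'.cons (fun _ => false) T.filling),
    (isPermTabB_succ_iff_dropRow rfl fun _ => rfl).2 T.2⟩, rfl⟩
  left_inv := by
    rintro ⟨⟨⟨μ, D⟩, h⟩, h0⟩
    have h0 : μ 0 = 0 := h0
    have hD0 : (fun _ => false) = D 0 := funext fun _ => (h.filling_eq_false (by simp [h0])).symm
    refine Subtype.ext (Subtype.ext (Prod.ext ?_ ?_))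
    · change Stream'.cons 0 (Stream'.tail μ) = μ
      rw [← h0]
      exact Stream'.eta μ
    · change Stream'.cons (fun _ => false) (Stream'.tail D) = D
      rw [hD0]
      exact Stream'.eta D
  right_inv _ := rfl

noncomputable def firstColumnEquiv (n : ℕ) :
    {T : PermTabB (n + 1) // T.shape 0 ≠ 0} ≃ Σ T : PermTabB n, firstColumnChoices T where
  toFun T :=
    have h := T.1.2.dropColumn T.2
    ⟨⟨(fun i => T.1.shape i - 1, fun i j => T.1.filling i (j + 1)), h.1⟩,
      ⟨firstColumn n T.1.filling, mem_filter.2 ⟨mem_powerset.2 h.2.1, h.2.2⟩⟩⟩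
  invFun x :=
    have hS := mem_filter.1 x.2.2
    ⟨⟨(extendShape n x.1.shape, extendFilling x.2.1 x.1.filling),
      x.1.2.extendColumn (mem_powerset.1 hS.1) hS.2⟩, by simp [shape, extendShape]⟩
  left_inv := by
    rintro ⟨⟨⟨μ, D⟩, h⟩, h0⟩
    refine Subtype.ext (Subtype.ext (Prod.ext ?_ ?_))
    · exact extendShape_dropColumn (h.1.pos_of_pos_zero (Nat.pos_of_ne_zero h0))
        fun _ hi => h.shape_eq_zero hi
    · exact extendFilling_firstColumn fun _ hi => h.filling_eq_false (by rw [h.shape_eq_zero hi])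
  right_inv := by
    rintro ⟨⟨⟨μ, D⟩, h⟩, S, hS⟩
    have hSn (i : ℕ) (hi : i ∈ S) : i ≤ n :=
      le_of_mem_freeRows (mem_powerset.1 (mem_filter.1 hS).1 hi)
    exact Sigma.subtype_ext
      (Subtype.ext (Prod.ext (dropColumn_extendShape fun _ hi => h.shape_eq_zero hi.le) rfl))
      (firstColumn_extendFilling (D := D) hSn)

noncomputable def succEquiv (n : ℕ) :
    PermTabB (n + 1) ≃ PermTabB n ⊕ Σ T : PermTabB n, firstColumnChoices T :=
  (Equiv.sumCompl fun T : PermTabB (n + 1) => T.shape 0 = 0).symm.trans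
    ((emptyRowEquiv n).sumCongr (firstColumnEquiv n))

instance : Unique (PermTabB 0) where
  default := ⟨(fun _ => 0, fun _ _ => false), by
    rw [isPermTabB_iff]
    simp [IsShapeB, IsRestrictingZero]⟩
  uniq T := Subtype.ext (Prod.ext (funext fun i => T.2.shape_eq_zero i.zero_le)
    (funext fun i => funext fun _ => T.2.filling_eq_false (by simp [T.2.shape_eq_zero i.zero_le])))

instance (n : ℕ) : Finite (PermTabB n) := by
  induction n with
  | zero => infer_instance
  | succ n ih => exact Finite.of_equiv _ (succEquiv n).symm

noncomputable instance (n : ℕ) : Fintype (PermTabB n) := Fintype.ofFinite _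

theorem numUnrestrictedRows_emptyRowEquiv (T : {T : PermTabB (n + 1) // T.shape 0 = 0}) :
    T.1.numUnrestrictedRows = (emptyRowEquiv n T).numUnrestrictedRows + 1 :=
  card_unrestrictedRows_succ_dropRow T.2

theorem numUnrestrictedRows_firstColumnEquiv (T : {T : PermTabB (n + 1) // T.shape 0 ≠ 0}) :
    T.1.numUnrestrictedRows = #(keptFree n (freeRows n (firstColumnEquiv n T).1.shape
      (firstColumnEquiv n T).1.filling) (firstColumnEquiv n T).2) := by
  obtain ⟨⟨⟨μ, D⟩, h⟩, h0⟩ := T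
  exact congrArg card (unrestrictedRows_succ_eq_keptFree
    (h.1.pos_of_pos_zero (Nat.pos_of_ne_zero h0))
    fun _ hi => h.filling_eq_false (by rw [h.shape_eq_zero hi]))

theorem pow_succ_add_sum_firstColumnChoices (T : PermTabB n) (t : ℕ) :
    t ^ (T.numUnrestrictedRows + 1) +
      ∑ S : firstColumnChoices T, t ^ #(keptFree n (freeRows n T.shape T.filling) S) =
      2 * t * (t + 1) ^ T.numUnrestrictedRows := by
  have hn := T.2.shape_eq_zero le_rfl
  rw [sum_coe_sort (firstColumnChoices T)
      fun S => t ^ #(keptFree n (freeRows n T.shape T.filling) S),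
    numUnrestrictedRows, ← card_freeRows hn,
    pow_card_add_sum_pow_card_keptFree t (mem_freeRows_self hn) fun _ => le_of_mem_freeRows,
    card_freeRows hn, Nat.add_sub_cancel]

end PermTabB

open PermTabB

noncomputable def weightedCount (n t : ℕ) : ℕ := ∑ T : PermTabB n, t ^ T.numUnrestrictedRows

theorem weightedCount_succ (n t : ℕ) :
    weightedCount (n + 1) t = 2 * t * weightedCount n (t + 1) := by
  calc weightedCount (n + 1) t
      = ∑ x, Sum.elim (fun T : PermTabB n => t ^ (T.numUnrestrictedRows + 1))
          (fun x : Σ T : PermTabB n, firstColumnChoices T =>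
            t ^ #(keptFree n (freeRows n x.1.shape x.1.filling) x.2)) x := by
        refine Fintype.sum_equiv (succEquiv n) _ _ fun T => ?_
        by_cases h0 : T.shape 0 = 0
        · simp [succEquiv, h0, numUnrestrictedRows_emptyRowEquiv ⟨T, h0⟩]
        · simp [succEquiv, h0, numUnrestrictedRows_firstColumnEquiv ⟨T, h0⟩]
    _ = 2 * t * weightedCount n (t + 1) := by
        simp only [Fintype.sum_sum_type, Fintype.sum_sigma, Sum.elim_inl, Sum.elim_inr,
          ← sum_add_distrib, pow_succ_add_sum_firstColumnChoices, weightedCount, mul_sum]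

theorem weightedCount_eq (n t : ℕ) : weightedCount n t = 2 ^ n * t.ascFactorial n := by
  induction n generalizing t with
  | zero => simp [weightedCount, numUnrestrictedRows, unrestrictedRows]
  | succ n ih =>
    rw [weightedCount_succ, ih, Nat.ascFactorial_succ, ← Nat.succ_ascFactorial]
    ring

/-- The number of type `B_n` permutation tableaux equals `2^n · n!`,
the order of the type `B_n` Weyl group. -/
theorem card_typeB_permutation_tableaux (n : ℕ) :
    Nat.card {x : (ℕ → ℕ) × (ℕ → ℕ → Bool) // IsPermTabB n x.1 x.2} =
      2 ^ n * Nat.factorial n := by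
  have hcard : Nat.card (PermTabB n) = weightedCount n 1 := by
    simp [weightedCount, Nat.card_eq_fintype_card]
  rw [hcard, weightedCount_eq, Nat.one_ascFactorial]
end

section
/- A preference function of length n is atomic if and only if no proper nonempty prefix of it consists of all occurrences of the letters 1 through j for some j ≥ 1. The number a_n of atomic preference functions satisfies F(x) = 1 − 1/P(x) where P(x) = Σ_{n≥0} f_n x^n is the ordinary generating function of preference functions (ordered Bell numbers, f_0 = 1) and F(x) = Σ_{n≥1} a_n x^n; equivalently, every preference function factors uniquely as a concatenation of shifted atomic preference functions. -/
/-- A preference function of length `n` (encoded as a function `ℕ → ℕ` vanishing off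
`{1, …, n}`): for some `k ≤ n`, all of `1, …, k` occur and nothing larger occurs. -/
def IsPref (n : ℕ) (p : ℕ → ℕ) : Prop :=
  (∀ i, i ∉ Finset.Icc 1 n → p i = 0) ∧
  ∃ k, k ≤ n ∧ (∀ i ∈ Finset.Icc 1 n, 1 ≤ p i ∧ p i ≤ k) ∧
    ∀ j ∈ Finset.Icc 1 k, ∃ i ∈ Finset.Icc 1 n, p i = j

/-- A preference function is atomic iff no proper nonempty prefix of it consists of all
occurrences in the word of the letters `1, …, j` for some `j ≥ 1`: i.e. there is no
`1 ≤ m < n` and `j ≥ 1` such that the first `m` letters use only values `≤ j`, all later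
letters are `> j`, and all of `1, …, j` occur among the first `m` letters. -/
def IsAtomicPref (n : ℕ) (p : ℕ → ℕ) : Prop :=
  IsPref n p ∧
  ¬ ∃ m, 1 ≤ m ∧ m < n ∧ ∃ j, 1 ≤ j ∧
      (∀ i ∈ Finset.Icc 1 m, p i ≤ j) ∧
      (∀ i ∈ Finset.Icc (m + 1) n, j < p i) ∧
      (∀ v ∈ Finset.Icc 1 j, ∃ i ∈ Finset.Icc 1 m, p i = v)

/-!
Call `m` a split point of a preference function `p` of length `n` if every letter among the
first `m` is smaller than every later letter; for `1 ≤ m < n` this is exactly the kind of prefix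
that atomicity forbids. Cutting `p` at its last split point `m < n` writes it as a preference
function of length `m` followed by a shifted preference function of length `n - m`, and the
latter is atomic precisely because `m` was the last split point. Conversely the shifted
concatenation of a preference function `q` of length `m` with an atomic one has last split
point `m`. This bijection gives `f n = ∑_{m < n} f m * a (n - m)` for `n ≥ 1`, which is the
coefficient form of `P * F = P - 1`.
-/

open Finset

namespace IsPref

variable {n : ℕ} {p : ℕ → ℕ}

theorem of_cover (hzero : ∀ i ∉ Icc 1 n, p i = 0) (k : ℕ)
    (hbound : ∀ i ∈ Icc 1 n, 1 ≤ p i ∧ p i ≤ k)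
    (hcover : ∀ v ∈ Icc 1 k, ∃ i ∈ Icc 1 n, p i = v) : IsPref n p := by
  refine ⟨hzero, k, ?_, hbound, hcover⟩
  have hsub : Icc 1 k ⊆ (Icc 1 n).image p := fun v hv => by
    obtain ⟨i, hi, rfl⟩ := hcover v hv
    exact mem_image_of_mem p hi
  simpa using (card_le_card hsub).trans card_image_le

theorem eq_zero (hp : IsPref n p) {i : ℕ} (hi : i ∉ Icc 1 n) : p i = 0 := hp.1 i hi

theorem one_le (hp : IsPref n p) {i : ℕ} (hi : i ∈ Icc 1 n) : 1 ≤ p i := by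
  obtain ⟨-, k, -, hbound, -⟩ := hp
  exact (hbound i hi).1

theorem le (hp : IsPref n p) (i : ℕ) : p i ≤ n := by
  by_cases hi : i ∈ Icc 1 n
  · obtain ⟨-, k, hkn, hbound, -⟩ := hp
    exact (hbound i hi).2.trans hkn
  · simp [hp.eq_zero hi]

theorem exists_eq (hp : IsPref n p) {v : ℕ} (hv : v ∈ Icc 1 ((Icc 1 n).sup p)) :
    ∃ i ∈ Icc 1 n, p i = v := by
  obtain ⟨-, k, -, hbound, hcover⟩ := hp
  have hsup : (Icc 1 n).sup p ≤ k := Finset.sup_le fun i hi => (hbound i hi).2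
  exact hcover v (by rw [mem_Icc] at hv ⊢; omega)

theorem sup_le_sup (hp : IsPref n p) (m : ℕ) : (Icc 1 m).sup p ≤ (Icc 1 n).sup p := by
  refine Finset.sup_le fun i _ => ?_
  by_cases hi : i ∈ Icc 1 n
  · exact le_sup hi
  · simp [hp.eq_zero hi]

end IsPref

instance (n : ℕ) : Finite {p : ℕ → ℕ // IsPref n p} := by
  refine Finite.of_injective
    (fun p (i : Fin (n + 1)) => (⟨p.1 i, Nat.lt_succ_of_le (p.2.le i)⟩ : Fin (n + 1))) ?_
  intro p p' h
  refine Subtype.ext (funext fun i => ?_)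
  by_cases hi : i ≤ n
  · simpa using congrArg Fin.val (congrFun h ⟨i, by omega⟩)
  · have hi' : i ∉ Icc 1 n := by simp; omega
    rw [p.2.eq_zero hi', p'.2.eq_zero hi']

theorem card_isPref_zero : Nat.card {p : ℕ → ℕ // IsPref 0 p} = 1 := by
  refine Nat.card_eq_one_iff_exists.2 ⟨⟨0, fun _ _ => rfl, 0, le_rfl, by simp, by simp⟩, ?_⟩
  exact fun p => Subtype.ext (funext fun i => p.2.eq_zero (by simp))

def IsSplit (n : ℕ) (p : ℕ → ℕ) (m : ℕ) : Prop :=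
  ∀ i ∈ Icc 1 m, ∀ i' ∈ Icc (m + 1) n, p i < p i'

instance (n : ℕ) (p : ℕ → ℕ) : DecidablePred (IsSplit n p) := fun m => by
  unfold IsSplit; infer_instance

theorem isSplit_zero (n : ℕ) (p : ℕ → ℕ) : IsSplit n p 0 := by
  simp [IsSplit]

namespace IsPref

variable {n m : ℕ} {p : ℕ → ℕ}

theorem sup_lt_of_isSplit (hp : IsPref n p) (hm : IsSplit n p m) {i : ℕ}
    (hi : i ∈ Icc (m + 1) n) : (Icc 1 m).sup p < p i := by
  have hpos : 0 < p i := hp.one_le (by rw [mem_Icc] at hi ⊢; omega)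
  exact (Finset.sup_lt_iff hpos).2 fun i' hi' => hm i' hi' i hi

theorem exists_eq_of_isSplit (hp : IsPref n p) (hm : IsSplit n p m) {v : ℕ}
    (hv : v ∈ Icc 1 ((Icc 1 m).sup p)) : ∃ i ∈ Icc 1 m, p i = v := by
  have hvn : v ∈ Icc 1 ((Icc 1 n).sup p) := by
    have := hp.sup_le_sup m
    rw [mem_Icc] at hv ⊢; omega
  obtain ⟨i, hi, rfl⟩ := hp.exists_eq hvn
  refine ⟨i, mem_Icc.2 ⟨(mem_Icc.1 hi).1, ?_⟩, rfl⟩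
  by_contra him
  have := hp.sup_lt_of_isSplit hm (i := i) (by rw [mem_Icc] at hi ⊢; omega)
  rw [mem_Icc] at hv; omega

end IsPref

theorem isAtomicPref_iff {n : ℕ} {p : ℕ → ℕ} :
    IsAtomicPref n p ↔ IsPref n p ∧ ¬ ∃ m, 1 ≤ m ∧ m < n ∧ IsSplit n p m := by
  refine and_congr_right fun hp => not_congr <| exists_congr fun m =>
    and_congr_right fun hm1 => and_congr_right fun hmn => ⟨?_, fun hm => ?_⟩
  · rintro ⟨j, -, hle, hlt, -⟩ i hi i' hi'
    exact (hle i hi).trans_lt (hlt i' hi')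
  · have h1 : (1 : ℕ) ∈ Icc 1 m := by simp; omega
    refine ⟨(Icc 1 m).sup p, (hp.one_le (by simp; omega)).trans (le_sup h1),
      fun i hi => le_sup hi, fun i hi => hp.sup_lt_of_isSplit hm hi,
      fun v hv => hp.exists_eq_of_isSplit hm hv⟩

def prefixOf (m : ℕ) (p : ℕ → ℕ) : ℕ → ℕ := fun i => if i ∈ Icc 1 m then p i else 0

def suffixOf (n m : ℕ) (p : ℕ → ℕ) : ℕ → ℕ :=
  fun i => if i ∈ Icc 1 (n - m) then p (m + i) - (Icc 1 m).sup p else 0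

def shiftConcat (n m : ℕ) (q r : ℕ → ℕ) : ℕ → ℕ :=
  fun i => if i ∈ Icc 1 m then q i else if i ∈ Icc 1 n then r (i - m) + (Icc 1 m).sup q else 0

section Factorization

variable {n m : ℕ} {p q r : ℕ → ℕ}

theorem suffixOf_add_sup (hp : IsPref n p) (hm : IsSplit n p m) {i : ℕ}
    (hi : i ∈ Icc 1 (n - m)) : suffixOf n m p i + (Icc 1 m).sup p = p (m + i) := by
  have := hp.sup_lt_of_isSplit hm (i := m + i) (by rw [mem_Icc] at hi ⊢; omega)
  simp only [suffixOf, if_pos hi]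
  omega

theorem IsPref.prefixOf (hp : IsPref n p) (hm : IsSplit n p m) (hmn : m ≤ n) :
    IsPref m (prefixOf m p) := by
  have happly : ∀ i ∈ Icc 1 m, _root_.prefixOf m p i = p i := fun i hi => if_pos hi
  refine .of_cover (fun i hi => if_neg hi) ((Icc 1 m).sup p) (fun i hi => ?_) fun v hv => ?_
  · rw [happly i hi]
    exact ⟨hp.one_le (by rw [mem_Icc] at hi ⊢; omega), le_sup hi⟩
  · obtain ⟨i, hi, hpi⟩ := hp.exists_eq_of_isSplit hm hv
    exact ⟨i, hi, (happly i hi).trans hpi⟩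

theorem IsPref.suffixOf (hp : IsPref n p) (hm : IsSplit n p m) :
    IsPref (n - m) (suffixOf n m p) := by
  refine .of_cover (fun i hi => if_neg hi) ((Icc 1 n).sup p - (Icc 1 m).sup p)
    (fun i hi => ?_) fun v hv => ?_
  · have hsum := suffixOf_add_sup hp hm hi
    have hlt := hp.sup_lt_of_isSplit hm (i := m + i) (by rw [mem_Icc] at hi ⊢; omega)
    have hle : p (m + i) ≤ (Icc 1 n).sup p := le_sup (by rw [mem_Icc] at hi ⊢; omega)
    omega
  · obtain ⟨i, hi, hpi⟩ := hp.exists_eq (v := v + (Icc 1 m).sup p)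
      (by rw [mem_Icc] at hv ⊢; omega)
    have him : m < i := by
      by_contra him
      have : p i ≤ (Icc 1 m).sup p := le_sup (by rw [mem_Icc] at hi ⊢; omega)
      rw [mem_Icc] at hv; omega
    have hi' : i - m ∈ Icc 1 (n - m) := by rw [mem_Icc] at hi ⊢; omega
    refine ⟨i - m, hi', ?_⟩
    have := suffixOf_add_sup hp hm hi'
    rw [Nat.add_sub_cancel' him.le] at this
    omega

theorem isSplit_add_iff (hp : IsPref n p) (hm : IsSplit n p m) {k : ℕ} :
    IsSplit n p (m + k) ↔ IsSplit (n - m) (suffixOf n m p) k := by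
  constructor
  · intro h i hi i' hi'
    have hs := suffixOf_add_sup hp hm (i := i) (by rw [mem_Icc] at hi hi' ⊢; omega)
    have hs' := suffixOf_add_sup hp hm (i := i') (by rw [mem_Icc] at hi' ⊢; omega)
    have := h (m + i) (by rw [mem_Icc] at hi ⊢; omega) (m + i') (by rw [mem_Icc] at hi' ⊢; omega)
    omega
  · intro h i hi i' hi'
    rw [mem_Icc] at hi hi'
    have hs' := suffixOf_add_sup hp hm (i := i' - m) (by rw [mem_Icc]; omega)
    rw [Nat.add_sub_cancel' (by omega)] at hs'
    by_cases him : i ≤ m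
    · have hle : p i ≤ (Icc 1 m).sup p := le_sup (by rw [mem_Icc]; omega)
      have := hp.sup_lt_of_isSplit hm (i := i') (by rw [mem_Icc]; omega)
      omega
    · have hs := suffixOf_add_sup hp hm (i := i - m) (by rw [mem_Icc]; omega)
      rw [Nat.add_sub_cancel' (by omega)] at hs
      have := h (i - m) (by rw [mem_Icc]; omega) (i' - m) (by rw [mem_Icc]; omega)
      omega

theorem shiftConcat_apply_add {i : ℕ} (hi : i ∈ Icc 1 (n - m)) :
    shiftConcat n m q r (m + i) = r i + (Icc 1 m).sup q := by
  rw [mem_Icc] at hi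
  have h1 : m + i ∉ Icc 1 m := by rw [mem_Icc]; omega
  have h2 : m + i ∈ Icc 1 n := by rw [mem_Icc]; omega
  simp [shiftConcat, h1, h2]

theorem IsPref.shiftConcat (hq : IsPref m q) (hr : IsPref (n - m) r) (hmn : m ≤ n) :
    IsPref n (shiftConcat n m q r) := by
  refine .of_cover (fun i hi => ?_) ((Icc 1 m).sup q + (Icc 1 (n - m)).sup r)
    (fun i hi => ?_) fun v hv => ?_
  · have him : i ∉ Icc 1 m := by rw [mem_Icc] at hi ⊢; omega
    simp [_root_.shiftConcat, him, hi]
  · by_cases him : i ∈ Icc 1 m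
    · simp only [_root_.shiftConcat, if_pos him]
      have := hq.one_le him
      have : q i ≤ (Icc 1 m).sup q := le_sup him
      omega
    · have hi' : i - m ∈ Icc 1 (n - m) := by rw [mem_Icc] at hi him ⊢; omega
      have := shiftConcat_apply_add (q := q) (r := r) hi'
      rw [Nat.add_sub_cancel' (by rw [mem_Icc] at hi him; omega)] at this
      have := hr.one_le hi'
      have : r (i - m) ≤ (Icc 1 (n - m)).sup r := le_sup hi'
      omega
  · rw [mem_Icc] at hv
    by_cases hvq : v ≤ (Icc 1 m).sup q
    · obtain ⟨i, hi, hqi⟩ := hq.exists_eq (v := v) (by rw [mem_Icc]; omega)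
      refine ⟨i, by rw [mem_Icc] at hi ⊢; omega, ?_⟩
      simp [_root_.shiftConcat, hi, hqi]
    · obtain ⟨i, hi, hri⟩ := hr.exists_eq (v := v - (Icc 1 m).sup q)
        (by rw [mem_Icc]; omega)
      refine ⟨m + i, by rw [mem_Icc] at hi ⊢; omega, ?_⟩
      rw [shiftConcat_apply_add hi, hri]
      omega

theorem isSplit_shiftConcat (hr : IsPref (n - m) r) : IsSplit n (shiftConcat n m q r) m := by
  intro i hi i' hi'
  have hi'' : i' - m ∈ Icc 1 (n - m) := by rw [mem_Icc] at hi' ⊢; omega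
  have hval := shiftConcat_apply_add (q := q) (r := r) hi''
  rw [Nat.add_sub_cancel' (by rw [mem_Icc] at hi'; omega)] at hval
  rw [hval]
  have := hr.one_le hi''
  have : q i ≤ (Icc 1 m).sup q := le_sup hi
  simp only [shiftConcat, if_pos hi]
  omega

theorem prefixOf_shiftConcat (hq : IsPref m q) : prefixOf m (shiftConcat n m q r) = q := by
  funext i
  by_cases hi : i ∈ Icc 1 m
  · simp [prefixOf, shiftConcat, hi]
  · simp [prefixOf, hi, hq.eq_zero hi]

theorem suffixOf_shiftConcat (hr : IsPref (n - m) r) : suffixOf n m (shiftConcat n m q r) = r := by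
  have hsup : (Icc 1 m).sup (shiftConcat n m q r) = (Icc 1 m).sup q :=
    sup_congr rfl fun i hi => if_pos hi
  funext i
  by_cases hi : i ∈ Icc 1 (n - m)
  · simp [suffixOf, hi, hsup, shiftConcat_apply_add hi]
  · simp [suffixOf, hi, hr.eq_zero hi]

theorem shiftConcat_prefixOf_suffixOf (hp : IsPref n p) (hm : IsSplit n p m) :
    shiftConcat n m (prefixOf m p) (suffixOf n m p) = p := by
  have hsup : (Icc 1 m).sup (prefixOf m p) = (Icc 1 m).sup p :=
    sup_congr rfl fun i hi => if_pos hi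
  funext i
  by_cases him : i ∈ Icc 1 m
  · simp [shiftConcat, prefixOf, him]
  by_cases hin : i ∈ Icc 1 n
  · have hi' : i - m ∈ Icc 1 (n - m) := by rw [mem_Icc] at him hin ⊢; omega
    have := suffixOf_add_sup hp hm hi'
    rw [Nat.add_sub_cancel' (by rw [mem_Icc] at him hin; omega)] at this
    simp only [shiftConcat, if_neg him, if_pos hin, hsup, this]
  · simp [shiftConcat, him, hin, hp.eq_zero hin]

end Factorization

def lastSplit (n : ℕ) (p : ℕ → ℕ) : ℕ := Nat.findGreatest (IsSplit n p) (n - 1)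

section LastSplit

variable {n m : ℕ} {p q r : ℕ → ℕ}

theorem isSplit_lastSplit : IsSplit n p (lastSplit n p) :=
  Nat.findGreatest_spec (Nat.zero_le _) (isSplit_zero n p)

theorem lastSplit_lt (hn : 1 ≤ n) : lastSplit n p < n :=
  (Nat.findGreatest_le _).trans_lt (by omega)

theorem not_isSplit_of_lastSplit_lt {k : ℕ} (hlt : lastSplit n p < k) (hkn : k < n) :
    ¬ IsSplit n p k :=
  Nat.findGreatest_is_greatest hlt (by omega)

theorem IsPref.isAtomicPref_suffixOf_lastSplit (hp : IsPref n p) :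
    IsAtomicPref (n - lastSplit n p) (_root_.suffixOf n (lastSplit n p) p) := by
  refine isAtomicPref_iff.2 ⟨hp.suffixOf isSplit_lastSplit, ?_⟩
  rintro ⟨k, hk1, hkn, hk⟩
  exact not_isSplit_of_lastSplit_lt (by omega) (by omega)
    ((isSplit_add_iff hp isSplit_lastSplit).2 hk)

theorem lastSplit_shiftConcat (hmn : m < n) (hq : IsPref m q) (hr : IsAtomicPref (n - m) r) :
    lastSplit n (shiftConcat n m q r) = m := by
  obtain ⟨hr, hatom⟩ := isAtomicPref_iff.1 hr
  have hp := hq.shiftConcat hr hmn.le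
  have hsplit : IsSplit n (shiftConcat n m q r) m := isSplit_shiftConcat hr
  refine le_antisymm (not_lt.1 fun hlt => hatom ?_) (Nat.le_findGreatest (by omega) hsplit)
  have hltn := lastSplit_lt (n := n) (p := shiftConcat n m q r) (by omega)
  have hsuf := (isSplit_add_iff hp hsplit (k := lastSplit n (shiftConcat n m q r) - m)).1
    (by rw [Nat.add_sub_cancel' hlt.le]; exact isSplit_lastSplit)
  rw [suffixOf_shiftConcat hr] at hsuf
  exact ⟨_, by omega, by omega, hsuf⟩

end LastSplit

def lastSplitFiberEquiv {n m : ℕ} (hmn : m < n) :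
    {p : ℕ → ℕ // IsPref n p ∧ lastSplit n p = m} ≃
      {q : ℕ → ℕ // IsPref m q} × {r : ℕ → ℕ // IsAtomicPref (n - m) r} where
  toFun p :=
    (⟨prefixOf m p.1, by
        obtain ⟨p, hp, rfl⟩ := p
        exact hp.prefixOf isSplit_lastSplit (lastSplit_lt (by omega)).le⟩,
      ⟨suffixOf n m p.1, by
        obtain ⟨p, hp, rfl⟩ := p
        exact hp.isAtomicPref_suffixOf_lastSplit⟩)
  invFun qr :=
    ⟨shiftConcat n m qr.1.1 qr.2.1, qr.1.2.shiftConcat qr.2.2.1 hmn.le,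
      lastSplit_shiftConcat hmn qr.1.2 qr.2.2⟩
  left_inv p := Subtype.ext <| by
    obtain ⟨p, hp, rfl⟩ := p
    exact shiftConcat_prefixOf_suffixOf hp isSplit_lastSplit
  right_inv qr := Prod.ext (Subtype.ext (prefixOf_shiftConcat qr.1.2))
    (Subtype.ext (suffixOf_shiftConcat qr.2.2.1))

def lastSplitSigmaEquiv {n : ℕ} (hn : 1 ≤ n) :
    {p : ℕ → ℕ // IsPref n p} ≃ Σ m : Fin n, {p : ℕ → ℕ // IsPref n p ∧ lastSplit n p = m} where
  toFun p := ⟨⟨lastSplit n p.1, lastSplit_lt hn⟩, p.1, p.2, rfl⟩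
  invFun p := ⟨p.2.1, p.2.2.1⟩
  right_inv x := Sigma.subtype_ext (Fin.ext x.2.2.2) rfl

theorem card_isPref_eq_sum {n : ℕ} (hn : 1 ≤ n) :
    Nat.card {p : ℕ → ℕ // IsPref n p} =
      ∑ m ∈ range n, Nat.card {q : ℕ → ℕ // IsPref m q} *
        Nat.card {r : ℕ → ℕ // IsAtomicPref (n - m) r} := by
  have : ∀ m, Finite {p : ℕ → ℕ // IsPref n p ∧ lastSplit n p = m} := fun m =>
    Finite.of_injective (fun p => (⟨p.1, p.2.1⟩ : {p : ℕ → ℕ // IsPref n p}))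
      fun p p' h => Subtype.ext (congrArg (fun p : {p : ℕ → ℕ // IsPref n p} => p.1) h)
  rw [Nat.card_congr (lastSplitSigmaEquiv hn), Nat.card_sigma, ← Fin.sum_univ_eq_sum_range]
  exact sum_congr rfl fun m _ => by
    rw [Nat.card_congr (lastSplitFiberEquiv m.2), Nat.card_prod]

open PowerSeries in
/-- With `P(x) = Σ_{n ≥ 0} f_n xⁿ` the generating function of preference functions
(`f_0 = 1`) and `F(x) = Σ_{n ≥ 1} a_n xⁿ` that of atomic preference functions, we have
`F = 1 − 1/P`, i.e. `P·F = P − 1`: every preference function factors uniquely as a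
concatenation of shifted atomic preference functions. -/
theorem atomic_preference_generating_function :
    (PowerSeries.mk fun n => (Nat.card {p : ℕ → ℕ // IsPref n p} : ℚ)) *
        (PowerSeries.mk fun n =>
          if n = 0 then 0 else (Nat.card {p : ℕ → ℕ // IsAtomicPref n p} : ℚ)) =
      (PowerSeries.mk fun n => (Nat.card {p : ℕ → ℕ // IsPref n p} : ℚ)) - 1 := by
  ext n
  rw [coeff_mul, Nat.sum_antidiagonal_eq_sum_range_succ_mk, sum_range_succ]
  rcases Nat.eq_zero_or_pos n with rfl | hn
  · simp [card_isPref_zero]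
  · have hsum := congrArg (Nat.cast (R := ℚ)) (card_isPref_eq_sum hn)
    push_cast at hsum
    simp only [coeff_mk, map_sub, coeff_one, Nat.sub_self, if_true, mul_zero, add_zero,
      if_neg hn.ne', sub_zero, hsum]
    exact sum_congr rfl fun m hm => by rw [if_neg (by simp at hm; omega)]
end
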